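/- arXiv:2105.11875 — 11 statements merged into one kernel-verified Lean document; each statement's English description precedes it below -/
import Mathlib

section
/- Let n be a positive integer, Ω > 0, and let m be a positive integer with m ≥ √n/2, and let u : [0,Ω] → ℝ be the piecewise-linear interpolant of ξ ↦ ξ² at the nodes kΩ/m, k = 0,…,m. Then every ξ = (ξ_1,…,ξ_n) ∈ [0,Ω]^n with Σ_{j=1}^n ξ_j² ≤ Ω²(1 − n/(4m²)) satisfies Σ_{j=1}^n u(ξ_j) ≤ Ω². In other words, the nonnegative part of the Euclidean ball of radius Ω·√(1 − n/(4m²)) is contained in the inner polyhedral approximation {ξ ∈ [0,Ω]^n : Σ_j u(ξ_j) ≤ Ω²} of the ball of radius Ω. -/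
/-- Let `n ≥ 1`, `Ω > 0`, let `m` be a positive integer with `m ≥ √n/2`,
and let `u : [0,Ω] → ℝ` be the piecewise-linear interpolant of `ξ ↦ ξ²` at the nodes
`kΩ/m`, `k = 0,…,m`.  Then every `ξ ∈ [0,Ω]^n` with `Σ_j ξ_j² ≤ Ω²(1 − n/(4m²))` satisfies
`Σ_j u(ξ_j) ≤ Ω²`: the nonnegative part of the ball of radius `Ω√(1 − n/(4m²))` is contained
in the inner polyhedral approximation `{ξ ∈ [0,Ω]^n : Σ_j u(ξ_j) ≤ Ω²}`. -/
theorem stmt_3 (n : ℕ) (hn : 0 < n) (Ω : ℝ) (hΩ : 0 < Ω) (m : ℕ) (hm : 0 < m)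
    (hmn : Real.sqrt n / 2 ≤ (m : ℝ)) (u : ℝ → ℝ)
    (hu : ∀ k : ℕ, 1 ≤ k → k ≤ m → ∀ ξ : ℝ,
      ((k : ℝ) - 1) * Ω / m ≤ ξ → ξ ≤ (k : ℝ) * Ω / m →
      u ξ = (2 * (k : ℝ) - 1) * Ω / m * ξ - ((k : ℝ) - 1) * (k : ℝ) * Ω ^ 2 / m ^ 2) :
    ∀ ξ : Fin n → ℝ, (∀ j, 0 ≤ ξ j ∧ ξ j ≤ Ω) →
      (∑ j, ξ j ^ 2) ≤ Ω ^ 2 * (1 - n / (4 * m ^ 2)) →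
      (∑ j, u (ξ j)) ≤ Ω ^ 2 := by
  intro ξ hbox hsum
  have hmR : (0:ℝ) < (m:ℝ) := by exact_mod_cast hm
  -- pointwise bound: u x ≤ x² + Ω²/(4m²) on [0,Ω]
  have key : ∀ x : ℝ, 0 ≤ x → x ≤ Ω → u x ≤ x ^ 2 + Ω ^ 2 / (4 * m ^ 2) := by
    intro x hx0 hxΩ
    obtain ⟨k, hk1, hkm, hl, hr⟩ :
        ∃ k : ℕ, 1 ≤ k ∧ k ≤ m ∧ ((k:ℝ) - 1) * Ω / m ≤ x ∧ x ≤ (k:ℝ) * Ω / m := by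
      rcases eq_or_lt_of_le hxΩ with h | h
      · refine ⟨m, hm, le_refl m, ?_, ?_⟩
        · rw [h]
          rw [div_le_iff₀ hmR]
          nlinarith
        · rw [h, le_div_iff₀ hmR]
          nlinarith
      · set f := Nat.floor (x * m / Ω) with hf
        have hnn : 0 ≤ x * m / Ω := by positivity
        have hfle : (f:ℝ) ≤ x * m / Ω := Nat.floor_le hnn
        have hflt : x * m / Ω < (f:ℝ) + 1 := Nat.lt_floor_add_one _
        have hfm : f + 1 ≤ m := by
          have : x * m / Ω < m := by
            rw [div_lt_iff₀ hΩ]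
            nlinarith
          have : (f:ℝ) < (m:ℝ) := lt_of_le_of_lt hfle this
          exact_mod_cast Nat.cast_lt.mp this
        refine ⟨f + 1, Nat.le_add_left 1 f, hfm, ?_, ?_⟩
        · push_cast
          rw [div_le_iff₀ hmR]
          rw [le_div_iff₀ hΩ] at hfle
          nlinarith
        · push_cast
          rw [le_div_iff₀ hmR]
          rw [div_lt_iff₀ hΩ] at hflt
          nlinarith
      -- done
    rw [hu k hk1 hkm x hl hr]
    have hl' : ((k:ℝ) - 1) * Ω ≤ x * m := by
      rw [div_le_iff₀ hmR] at hl; linarith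
    have hr' : x * m ≤ (k:ℝ) * Ω := by
      rw [le_div_iff₀ hmR] at hr; linarith
    have h1 : (x * m - ((k:ℝ) - 1) * Ω) * ((k:ℝ) * Ω - x * m) ≥ 0 :=
      mul_nonneg (by linarith) (by linarith)
    have expand : ((2 * (k:ℝ) - 1) * Ω / m * x - ((k:ℝ) - 1) * (k:ℝ) * Ω ^ 2 / m ^ 2
        - x ^ 2) * m ^ 2 = (x * m - ((k:ℝ) - 1) * Ω) * ((k:ℝ) * Ω - x * m) := by
      field_simp
      ring
    have hgap : (2 * (k:ℝ) - 1) * Ω / m * x - ((k:ℝ) - 1) * (k:ℝ) * Ω ^ 2 / m ^ 2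
        - x ^ 2 ≤ Ω ^ 2 / (4 * m ^ 2) := by
      rw [le_div_iff₀ (by positivity : (0:ℝ) < 4 * (m:ℝ)^2)]
      nlinarith [expand, h1, sq_nonneg (x * m - ((k:ℝ)-1) * Ω - ((k:ℝ) * Ω - x * m))]
    linarith
  calc ∑ j, u (ξ j) ≤ ∑ j, (ξ j ^ 2 + Ω ^ 2 / (4 * m ^ 2)) := by
        apply Finset.sum_le_sum
        intro j _
        exact key (ξ j) (hbox j).1 (hbox j).2
    _ = (∑ j, ξ j ^ 2) + n * (Ω ^ 2 / (4 * m ^ 2)) := by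
        rw [Finset.sum_add_distrib, Finset.sum_const, Finset.card_univ, Fintype.card_fin,
          nsmul_eq_mul]
    _ ≤ Ω ^ 2 * (1 - n / (4 * m ^ 2)) + n * (Ω ^ 2 / (4 * m ^ 2)) := by linarith
    _ = Ω ^ 2 := by
        field_simp
        ring
end

section
/- Let n be a positive integer, Ω > 0, let m be a positive integer, and let u : [0,Ω] → ℝ be the piecewise-linear interpolant of ξ ↦ ξ² at the nodes kΩ/m, k = 0,…,m. Then every ξ = (ξ_1,…,ξ_n) ∈ [0,Ω]^n with Σ_{j=1}^n (u(ξ_j) − Ω²/(4m²)) ≤ Ω² satisfies Σ_{j=1}^n ξ_j² ≤ Ω²(1 + n/(4m²)). In other words, the outer polyhedral approximation {ξ ∈ [0,Ω]^n : Σ_j (u(ξ_j) − Ω²/(4m²)) ≤ Ω²} of the ball of radius Ω is contained in the Euclidean ball of radius Ω·√(1 + n/(4m²)). -/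
/-!
On each cell `[(k-1)h, kh]` of the grid `h = Ω/m`, the interpolant `u` is the chord of `ξ²`,
and the chord through `a` and `b` exceeds the parabola by `(ξ - a)(b - ξ) ≥ 0`. Hence
`Σ ξ_j² ≤ Σ u(ξ_j) ≤ Ω² + n Ω²/(4m²)`.
-/

theorem sq_le_chord {a b x : ℝ} (hax : a ≤ x) (hxb : x ≤ b) :
    x ^ 2 ≤ (a + b) * x - a * b := by
  nlinarith [mul_nonneg (sub_nonneg.2 hax) (sub_nonneg.2 hxb)]

theorem exists_mem_grid_cell {m : ℕ} (hm : 0 < m) {h x : ℝ} (hh : 0 < h)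
    (hx₀ : 0 ≤ x) (hxm : x ≤ m * h) :
    ∃ k : ℕ, 1 ≤ k ∧ k ≤ m ∧ ((k : ℝ) - 1) * h ≤ x ∧ x ≤ k * h := by
  set t := x / h
  have ht₀ : 0 ≤ t := div_nonneg hx₀ hh.le
  have htm : t ≤ m := (div_le_iff₀ hh).2 hxm
  refine ⟨max ⌈t⌉₊ 1, le_max_right _ _, max_le (Nat.ceil_le.2 htm) hm, ?_, ?_⟩
  · have hk : ((max ⌈t⌉₊ 1 : ℕ) : ℝ) ≤ t + 1 := by
      push_cast
      exact max_le (Nat.ceil_lt_add_one ht₀).le (by linarith)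
    rw [← le_div_iff₀ hh]
    linarith
  · rw [← div_le_iff₀ hh]
    exact (Nat.le_ceil t).trans (by exact_mod_cast le_max_left _ _)

theorem sq_le_interpolant {Ω : ℝ} (hΩ : 0 < Ω) {m : ℕ} (hm : 0 < m) {u : ℝ → ℝ}
    (hu : ∀ k : ℕ, 1 ≤ k → k ≤ m → ∀ ξ : ℝ,
      ((k : ℝ) - 1) * Ω / m ≤ ξ → ξ ≤ (k : ℝ) * Ω / m →
      u ξ = (2 * (k : ℝ) - 1) * Ω / m * ξ - ((k : ℝ) - 1) * (k : ℝ) * Ω ^ 2 / m ^ 2)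
    {x : ℝ} (hx₀ : 0 ≤ x) (hxΩ : x ≤ Ω) : x ^ 2 ≤ u x := by
  have hm' : (0 : ℝ) < m := by exact_mod_cast hm
  obtain ⟨k, hk₁, hkm, hlo, hhi⟩ :=
    exists_mem_grid_cell hm (div_pos hΩ hm') hx₀ (by rwa [mul_div_cancel₀ _ hm'.ne'])
  rw [← mul_div_assoc] at hlo hhi
  rw [hu k hk₁ hkm x hlo hhi]
  convert sq_le_chord hlo hhi using 1
  ring

theorem stmt_4_general (n : ℕ) (Ω : ℝ) (hΩ : 0 < Ω) (m : ℕ) (hm : 0 < m)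
    (u : ℝ → ℝ)
    (hu : ∀ k : ℕ, 1 ≤ k → k ≤ m → ∀ ξ : ℝ,
      ((k : ℝ) - 1) * Ω / m ≤ ξ → ξ ≤ (k : ℝ) * Ω / m →
      u ξ = (2 * (k : ℝ) - 1) * Ω / m * ξ - ((k : ℝ) - 1) * (k : ℝ) * Ω ^ 2 / m ^ 2) :
    ∀ ξ : Fin n → ℝ, (∀ j, 0 ≤ ξ j ∧ ξ j ≤ Ω) →
      (∑ j, (u (ξ j) - Ω ^ 2 / (4 * m ^ 2))) ≤ Ω ^ 2 →
      (∑ j, ξ j ^ 2) ≤ Ω ^ 2 * (1 + n / (4 * m ^ 2)) := by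
  intro ξ hξ hsum
  calc ∑ j, ξ j ^ 2
      ≤ ∑ j, u (ξ j) :=
        Finset.sum_le_sum fun j _ => sq_le_interpolant hΩ hm hu (hξ j).1 (hξ j).2
    _ = (∑ j, (u (ξ j) - Ω ^ 2 / (4 * m ^ 2))) + n * (Ω ^ 2 / (4 * m ^ 2)) := by
        simp [Finset.sum_sub_distrib]
    _ ≤ Ω ^ 2 * (1 + n / (4 * m ^ 2)) := by
        rw [mul_add, mul_one, mul_div_left_comm]
        linarith

/-- Let `n ≥ 1`, `Ω > 0`, let `m` be a positive integer, and let
`u : [0,Ω] → ℝ` be the piecewise-linear interpolant of `ξ ↦ ξ²` at the nodes `kΩ/m`,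
`k = 0,…,m`.  Then every `ξ ∈ [0,Ω]^n` with `Σ_j (u(ξ_j) − Ω²/(4m²)) ≤ Ω²` satisfies
`Σ_j ξ_j² ≤ Ω²(1 + n/(4m²))`: the outer polyhedral approximation is contained in the
Euclidean ball of radius `Ω√(1 + n/(4m²))`. -/
theorem stmt_4 (n : ℕ) (hn : 0 < n) (Ω : ℝ) (hΩ : 0 < Ω) (m : ℕ) (hm : 0 < m)
    (u : ℝ → ℝ)
    (hu : ∀ k : ℕ, 1 ≤ k → k ≤ m → ∀ ξ : ℝ,
      ((k : ℝ) - 1) * Ω / m ≤ ξ → ξ ≤ (k : ℝ) * Ω / m →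
      u ξ = (2 * (k : ℝ) - 1) * Ω / m * ξ - ((k : ℝ) - 1) * (k : ℝ) * Ω ^ 2 / m ^ 2) :
    ∀ ξ : Fin n → ℝ, (∀ j, 0 ≤ ξ j ∧ ξ j ≤ Ω) →
      (∑ j, (u (ξ j) - Ω ^ 2 / (4 * m ^ 2))) ≤ Ω ^ 2 →
      (∑ j, ξ j ^ 2) ≤ Ω ^ 2 * (1 + n / (4 * m ^ 2)) :=
  stmt_4_general n Ω hΩ m hm u hu
end

section
/- Let n, m be positive integers, Ω > 0, and σ_1,…,σ_n ≥ 0. Then for every x ∈ {0,1}^n, β(x, m²) ≤ Ω·√(Σ_{j=1}^n σ_j² x_j²). -/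
lemma sq_sum_le_weighted (z : ℕ → ℝ) (hz : ∀ k, 0 ≤ z k ∧ z k ≤ 1) :
    ∀ m : ℕ, (∑ k ∈ Finset.range m, z k) ^ 2 ≤
      ∑ k ∈ Finset.range m, (2 * (k : ℝ) + 1) * z k := by
  intro m
  induction m with
  | zero => simp
  | succ m ih =>
    rw [Finset.sum_range_succ, Finset.sum_range_succ]
    have hS0 : 0 ≤ ∑ k ∈ Finset.range m, z k :=
      Finset.sum_nonneg fun k _ => (hz k).1
    have hSm : (∑ k ∈ Finset.range m, z k) ≤ m := by
      calc (∑ k ∈ Finset.range m, z k) ≤ ∑ k ∈ Finset.range m, (1:ℝ) :=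
            Finset.sum_le_sum fun k _ => (hz k).2
        _ = m := by simp
    have h0 := (hz m).1
    have h1 := (hz m).2
    have hsq : z m ^ 2 ≤ z m := by nlinarith
    nlinarith [mul_le_mul_of_nonneg_right hSm h0]

/-- With `d_j^k = Ω σ_j/m`, `f_j^k = 2k−1`, and `β(x,Δ)` the maximum of
`Σ_j Σ_k d_j^k x_j z_j^k` over `z ∈ [0,1]^{n×m}` with `Σ_j Σ_k f_j^k z_j^k ≤ Δ`:
for every `x ∈ {0,1}^n`, `β(x, m²) ≤ Ω·√(Σ_j σ_j² x_j²)`. -/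
theorem stmt_6 (n m : ℕ) (hn : 0 < n) (hm : 0 < m) (Ω : ℝ) (hΩ : 0 < Ω)
    (σ : Fin n → ℝ) (hσ : ∀ j, 0 ≤ σ j)
    (x : Fin n → ℝ) (hx : ∀ j, x j = 0 ∨ x j = 1) (β : ℝ)
    (hβ : IsGreatest
      {v : ℝ | ∃ z : Fin n → Fin m → ℝ,
        (∀ j k, 0 ≤ z j k ∧ z j k ≤ 1) ∧
        (∑ j, ∑ k : Fin m, (2 * ((k : ℕ) : ℝ) + 1) * z j k) ≤ (m : ℝ) ^ 2 ∧
        v = ∑ j, ∑ k : Fin m, Ω * σ j / m * x j * z j k} β) :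
    β ≤ Ω * Real.sqrt (∑ j, σ j ^ 2 * x j ^ 2) := by
  obtain ⟨z, hz01, hcon, hval⟩ := hβ.1
  set t : Fin n → ℝ := fun j => ∑ k : Fin m, z j k with ht
  set c : Fin n → ℝ := fun j => Ω * σ j / m * x j with hc
  have hmpos : (0:ℝ) < m := by exact_mod_cast hm
  -- each t j ≥ 0 and t j ^ 2 ≤ inner weighted sum
  have hkey : ∀ j, t j ^ 2 ≤ ∑ k : Fin m, (2 * ((k : ℕ) : ℝ) + 1) * z j k := by
    intro j
    set g : ℕ → ℝ := fun k => if h : k < m then z j ⟨k, h⟩ else 0 with hg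
    have hz' : ∀ k : ℕ, 0 ≤ g k ∧ g k ≤ 1 := by
      intro k
      by_cases h : k < m
      · simp [hg, h]; exact ⟨(hz01 j ⟨k, h⟩).1, (hz01 j ⟨k, h⟩).2⟩
      · simp [hg, h]
    have hmain := sq_sum_le_weighted g hz' m
    have e1 : t j = ∑ k ∈ Finset.range m, g k := by
      rw [← Fin.sum_univ_eq_sum_range g m]
      exact Finset.sum_congr rfl fun k _ => by simp [hg, k.isLt]
    have e2 : (∑ k : Fin m, (2 * ((k : ℕ) : ℝ) + 1) * z j k)
        = ∑ k ∈ Finset.range m, (2 * (k : ℝ) + 1) * g k := by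
      rw [← Fin.sum_univ_eq_sum_range (fun k => (2 * (k : ℝ) + 1) * g k) m]
      exact Finset.sum_congr rfl fun k _ => by simp [hg, k.isLt]
    rw [e1, e2]; exact hmain
  have htB : ∑ j, t j ^ 2 ≤ (m : ℝ) ^ 2 :=
    le_trans (Finset.sum_le_sum fun j _ => hkey j) hcon
  have hcnn : ∀ j, 0 ≤ c j := by
    intro j
    rcases hx j with h | h <;> simp [hc, h]
    exact div_nonneg (mul_nonneg hΩ.le (hσ j)) hmpos.le
  have htnn : ∀ j, 0 ≤ t j := fun j => Finset.sum_nonneg fun k _ => (hz01 j k).1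
  have hvβ : β = ∑ j, c j * t j := by
    rw [hval]
    exact Finset.sum_congr rfl fun j _ => by rw [Finset.mul_sum]
  have hcs : (∑ j, c j * t j) ^ 2 ≤ (∑ j, c j ^ 2) * ∑ j, t j ^ 2 :=
    Finset.sum_mul_sq_le_sq_mul_sq Finset.univ c t
  have hA : ∑ j, c j ^ 2 = (Ω / m) ^ 2 * ∑ j, σ j ^ 2 * x j ^ 2 := by
    rw [Finset.mul_sum]
    exact Finset.sum_congr rfl fun j _ => by simp [hc]; ring
  have hβnn : 0 ≤ β := by
    rw [hvβ]; exact Finset.sum_nonneg fun j _ => mul_nonneg (hcnn j) (htnn j)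
  have hSnn : 0 ≤ ∑ j, σ j ^ 2 * x j ^ 2 :=
    Finset.sum_nonneg fun j _ => by positivity
  have hβ2 : β ^ 2 ≤ (Ω * Real.sqrt (∑ j, σ j ^ 2 * x j ^ 2)) ^ 2 := by
    have h1 : β ^ 2 ≤ (∑ j, c j ^ 2) * ∑ j, t j ^ 2 := by rw [hvβ]; exact hcs
    have h2 : (∑ j, c j ^ 2) * ∑ j, t j ^ 2 ≤ (∑ j, c j ^ 2) * (m:ℝ)^2 :=
      mul_le_mul_of_nonneg_left htB (Finset.sum_nonneg fun j _ => sq_nonneg _)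
    have h3 : (∑ j, c j ^ 2) * (m:ℝ)^2 = Ω ^ 2 * ∑ j, σ j ^ 2 * x j ^ 2 := by
      rw [hA]; field_simp
    have h4 : (Ω * Real.sqrt (∑ j, σ j ^ 2 * x j ^ 2)) ^ 2
        = Ω ^ 2 * ∑ j, σ j ^ 2 * x j ^ 2 := by
      rw [mul_pow, Real.sq_sqrt hSnn]
    linarith
  have hrnn : 0 ≤ Ω * Real.sqrt (∑ j, σ j ^ 2 * x j ^ 2) :=
    mul_nonneg hΩ.le (Real.sqrt_nonneg _)
  nlinarith [hβ2, hβnn, hrnn]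
end

section
/- Let n be a positive integer, Ω > 0, σ_1,…,σ_n ≥ 0, and let m be a positive integer with m ≥ √n/2. Then for every x ∈ {0,1}^n, β(x, m²) ≥ Ω·√(1 − n/(4m²))·√(Σ_{j=1}^n σ_j² x_j²). -/
lemma clampA (m : ℕ) (t : ℝ) (ht : 0 ≤ t) :
    ∑ k ∈ Finset.range m, min 1 (max 0 (t - (k : ℝ))) = min t m := by
  induction m with
  | zero => simp [min_eq_right ht]
  | succ m ih =>
    rw [Finset.sum_range_succ, ih]
    push_cast
    rcases le_total t m with h | h
    · rw [max_eq_left (show t - (m:ℝ) ≤ 0 by linarith),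
        min_eq_right (show (0:ℝ) ≤ 1 by norm_num),
        min_eq_left h, min_eq_left (show t ≤ (m:ℝ) + 1 by linarith)]
      ring
    · rcases le_total t (m + 1) with h2 | h2
      · rw [max_eq_right (show (0:ℝ) ≤ t - m by linarith),
          min_eq_right (show t - (m:ℝ) ≤ 1 by linarith),
          min_eq_right (show (m:ℝ) ≤ t from h), min_eq_left h2]
        ring
      · rw [max_eq_right (show (0:ℝ) ≤ t - m by linarith),
          min_eq_left (show (1:ℝ) ≤ t - m by linarith),
          min_eq_right (show (m:ℝ) ≤ t from h),
          min_eq_right (show (m:ℝ) + 1 ≤ t from h2)]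

lemma clampB0 (m : ℕ) (t : ℝ) (ht : (m : ℝ) ≤ t) :
    ∑ k ∈ Finset.range m, (2 * (k : ℝ) + 1) * min 1 (max 0 (t - (k : ℝ)))
      = (m : ℝ) ^ 2 := by
  induction m with
  | zero => simp
  | succ m ih =>
    rw [Finset.sum_range_succ]
    push_cast at ht ⊢
    rw [ih (by linarith),
      max_eq_right (show (0:ℝ) ≤ t - m by linarith),
      min_eq_left (show (1:ℝ) ≤ t - m by linarith)]
    ring

lemma clampB (m : ℕ) (t : ℝ) (ht : 0 ≤ t) :
    ∑ k ∈ Finset.range m, (2 * (k : ℝ) + 1) * min 1 (max 0 (t - (k : ℝ)))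
      ≤ t ^ 2 + 1 / 4 := by
  induction m with
  | zero => simp; positivity
  | succ m ih =>
    rw [Finset.sum_range_succ]
    push_cast
    rcases le_total t m with h | h
    · rw [max_eq_left (show t - (m:ℝ) ≤ 0 by linarith),
        min_eq_right (show (0:ℝ) ≤ 1 by norm_num), mul_zero, add_zero]
      exact ih
    · rw [clampB0 m t h]
      rcases le_total t (m + 1) with h2 | h2
      · rw [max_eq_right (show (0:ℝ) ≤ t - m by linarith),
          min_eq_right (show t - (m:ℝ) ≤ 1 by linarith)]
        nlinarith [sq_nonneg (t - m - 1/2)]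
      · rw [max_eq_right (show (0:ℝ) ≤ t - m by linarith),
          min_eq_left (show (1:ℝ) ≤ t - m by linarith)]
        nlinarith

/-- With `d_j^k = Ω σ_j/m`, `f_j^k = 2k−1`, and `β(x,Δ)` the maximum of
`Σ_j Σ_k d_j^k x_j z_j^k` over `z ∈ [0,1]^{n×m}` with `Σ_j Σ_k f_j^k z_j^k ≤ Δ`:
if `m ≥ √n/2` then for every `x ∈ {0,1}^n`,
`β(x, m²) ≥ Ω·√(1 − n/(4m²))·√(Σ_j σ_j² x_j²)`. -/
theorem stmt_7 (n : ℕ) (hn : 0 < n) (Ω : ℝ) (hΩ : 0 < Ω)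
    (σ : Fin n → ℝ) (hσ : ∀ j, 0 ≤ σ j)
    (m : ℕ) (hm : 0 < m) (hmn : Real.sqrt n / 2 ≤ (m : ℝ))
    (x : Fin n → ℝ) (hx : ∀ j, x j = 0 ∨ x j = 1) (β : ℝ)
    (hβ : IsGreatest
      {v : ℝ | ∃ z : Fin n → Fin m → ℝ,
        (∀ j k, 0 ≤ z j k ∧ z j k ≤ 1) ∧
        (∑ j, ∑ k : Fin m, (2 * ((k : ℕ) : ℝ) + 1) * z j k) ≤ (m : ℝ) ^ 2 ∧
        v = ∑ j, ∑ k : Fin m, Ω * σ j / m * x j * z j k} β) :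
    Ω * Real.sqrt (1 - n / (4 * m ^ 2)) * Real.sqrt (∑ j, σ j ^ 2 * x j ^ 2) ≤ β := by
  have hm0 : (0:ℝ) < m := by exact_mod_cast hm
  set S : ℝ := ∑ j, σ j ^ 2 * x j ^ 2 with hSdef
  have hS0 : 0 ≤ S := Finset.sum_nonneg fun j _ => by positivity
  have hn4 : (n : ℝ) ≤ 4 * m ^ 2 := by
    nlinarith [Real.sq_sqrt (show (0:ℝ) ≤ n by positivity), Real.sqrt_nonneg (n:ℝ)]
  have hM : (0:ℝ) ≤ (m:ℝ) ^ 2 - n / 4 := by linarith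
  rcases eq_or_lt_of_le hS0 with hS | hS
  · -- S = 0 : RHS is 0, and 0 is in the set via z = 0
    have h0 : (0:ℝ) ∈ {v : ℝ | ∃ z : Fin n → Fin m → ℝ,
        (∀ j k, 0 ≤ z j k ∧ z j k ≤ 1) ∧
        (∑ j, ∑ k : Fin m, (2 * ((k : ℕ) : ℝ) + 1) * z j k) ≤ (m : ℝ) ^ 2 ∧
        0 = ∑ j, ∑ k : Fin m, Ω * σ j / m * x j * z j k} := by
      refine ⟨fun _ _ => 0, fun j k => by norm_num, by simp, by simp⟩
    have hβ0 : (0:ℝ) ≤ β := hβ.2 h0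
    rw [← hS, Real.sqrt_zero, mul_zero]
    exact hβ0
  · set L : ℝ := Real.sqrt S with hLdef
    have hL : 0 < L := Real.sqrt_pos.mpr hS
    have hL2 : L ^ 2 = S := Real.sq_sqrt hS0
    set lam : ℝ := Real.sqrt ((m:ℝ) ^ 2 - n / 4) / L with hlamdef
    have hlam0 : 0 ≤ lam := by positivity
    set t : Fin n → ℝ := fun j => lam * (σ j * x j) with htdef
    have hsx0 : ∀ j, 0 ≤ σ j * x j := by
      intro j; rcases hx j with h | h <;> simp [h]; exact hσ j
    have hsxL : ∀ j, σ j * x j ≤ L := by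
      intro j
      have h1 : (σ j * x j) ^ 2 ≤ S := by
        have h2 : σ j ^ 2 * x j ^ 2 ≤ S :=
          Finset.single_le_sum (f := fun j => σ j ^ 2 * x j ^ 2)
            (fun i _ => by positivity) (Finset.mem_univ j)
        nlinarith
      calc σ j * x j = Real.sqrt ((σ j * x j) ^ 2) := (Real.sqrt_sq (hsx0 j)).symm
        _ ≤ Real.sqrt S := Real.sqrt_le_sqrt h1
        _ = L := rfl
    have ht0 : ∀ j, 0 ≤ t j := fun j => mul_nonneg hlam0 (hsx0 j)
    have htm : ∀ j, t j ≤ m := by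
      intro j
      have h1 : t j ≤ lam * L := by
        have := hsxL j; simp only [htdef]; nlinarith
      have h2 : lam * L = Real.sqrt ((m:ℝ) ^ 2 - n / 4) := by
        rw [hlamdef, div_mul_cancel₀ _ hL.ne']
      have h3 : Real.sqrt ((m:ℝ) ^ 2 - n / 4) ≤ Real.sqrt ((m:ℝ) ^ 2) :=
        Real.sqrt_le_sqrt (by linarith)
      rw [Real.sqrt_sq hm0.le] at h3
      linarith
    set z : Fin n → Fin m → ℝ := fun j k => min 1 (max 0 (t j - ((k:ℕ) : ℝ))) with hzdef
    have hz01 : ∀ j k, 0 ≤ z j k ∧ z j k ≤ 1 := by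
      intro j k
      constructor
      · exact le_min (by norm_num) (le_max_left _ _)
      · exact min_le_left _ _
    have hzsum : ∀ j, (∑ k : Fin m, z j k) = t j := by
      intro j
      rw [show (∑ k : Fin m, z j k)
          = ∑ k ∈ Finset.range m, min 1 (max 0 (t j - (k : ℝ))) from
        Fin.sum_univ_eq_sum_range (fun k => min 1 (max 0 (t j - (k : ℝ)))) m]
      rw [clampA m (t j) (ht0 j), min_eq_left (htm j)]
    have hlamS : lam ^ 2 * S = (m:ℝ) ^ 2 - n / 4 := by
      rw [hlamdef, div_pow, Real.sq_sqrt hM, hL2]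
      exact div_mul_cancel₀ _ (ne_of_gt hS)
    -- budget
    have hbudget : (∑ j, ∑ k : Fin m, (2 * ((k : ℕ) : ℝ) + 1) * z j k) ≤ (m : ℝ) ^ 2 := by
      have hper : ∀ j, (∑ k : Fin m, (2 * ((k : ℕ) : ℝ) + 1) * z j k)
          ≤ (t j) ^ 2 + 1 / 4 := by
        intro j
        rw [show (∑ k : Fin m, (2 * ((k : ℕ) : ℝ) + 1) * z j k)
            = ∑ k ∈ Finset.range m, (2 * (k : ℝ) + 1) * min 1 (max 0 (t j - (k : ℝ))) from
          Fin.sum_univ_eq_sum_range (fun k => (2 * (k : ℝ) + 1) * min 1 (max 0 (t j - (k : ℝ)))) m]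
        exact clampB m (t j) (ht0 j)
      calc (∑ j, ∑ k : Fin m, (2 * ((k : ℕ) : ℝ) + 1) * z j k)
          ≤ ∑ j, ((t j) ^ 2 + 1 / 4) := Finset.sum_le_sum fun j _ => hper j
        _ = (∑ j, (t j) ^ 2) + n * (1/4) := by
            rw [Finset.sum_add_distrib, Finset.sum_const, Finset.card_univ,
              Fintype.card_fin, nsmul_eq_mul]
        _ = lam ^ 2 * S + n * (1/4) := by
            congr 1
            rw [hSdef, Finset.mul_sum]
            exact Finset.sum_congr rfl fun j _ => by simp only [htdef]; ring
        _ = (m:ℝ) ^ 2 := by rw [hlamS]; ring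
    have hmem : ∃ z' : Fin n → Fin m → ℝ,
        (∀ j k, 0 ≤ z' j k ∧ z' j k ≤ 1) ∧
        (∑ j, ∑ k : Fin m, (2 * ((k : ℕ) : ℝ) + 1) * z' j k) ≤ (m : ℝ) ^ 2 ∧
        (∑ j, ∑ k : Fin m, Ω * σ j / m * x j * z j k)
          = ∑ j, ∑ k : Fin m, Ω * σ j / m * x j * z' j k :=
      ⟨z, hz01, hbudget, rfl⟩
    have hβv := hβ.2 hmem
    -- value computation
    have hval : (∑ j, ∑ k : Fin m, Ω * σ j / m * x j * z j k) = Ω * lam / m * S := by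
      have h1 : ∀ j, (∑ k : Fin m, Ω * σ j / m * x j * z j k)
          = Ω * lam / m * (σ j ^ 2 * x j ^ 2) := by
        intro j
        rw [show (∑ k : Fin m, Ω * σ j / m * x j * z j k)
            = Ω * σ j / m * x j * (∑ k : Fin m, z j k) from (Finset.mul_sum _ _ _).symm]
        rw [hzsum j]; simp only [htdef]; ring
      rw [Finset.sum_congr rfl fun j _ => h1 j, hSdef, Finset.mul_sum]
    -- the sqrt identity
    have hkey : Real.sqrt (1 - (n:ℝ) / (4 * m ^ 2)) = Real.sqrt ((m:ℝ) ^ 2 - n / 4) / m := by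
      rw [show (1 - (n:ℝ) / (4 * m ^ 2)) = ((m:ℝ) ^ 2 - n / 4) / (m:ℝ) ^ 2 by
        field_simp]
      rw [Real.sqrt_div hM, Real.sqrt_sq hm0.le]
    have hfin : Ω * lam / m * S = Ω * Real.sqrt (1 - (n:ℝ) / (4 * m ^ 2)) * L := by
      rw [hkey, hlamdef, ← hL2]
      field_simp
    rw [hval, hfin] at hβv
    exact hβv
end

section
/- Let n, m be positive integers, Ω > 0, and σ_1,…,σ_n ≥ 0. Then for every x ∈ {0,1}^n, β(x, m² + n/4) ≥ Ω·√(Σ_{j=1}^n σ_j² x_j²). Consequently, every x ∈ {0,1}^n satisfying Σ_j â_j x_j + β(x, m² + n/4) ≤ b (for reals â_1,…,â_n and b) also satisfies the second-order cone constraint Σ_j â_j x_j + Ω·√(Σ_j σ_j² x_j²) ≤ b. -/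
lemma aux_clamp (m : ℕ) (t : ℝ) (ht0 : 0 ≤ t) (htm : t ≤ m) :
    (∀ k : ℕ, 0 ≤ min t ((k:ℝ)+1) - min t k ∧ min t ((k:ℝ)+1) - min t k ≤ 1) ∧
    (∑ k ∈ Finset.range m, (min t ((k:ℝ)+1) - min t k)) = t ∧
    (∑ k ∈ Finset.range m, (2*(k:ℝ)+1) * (min t ((k:ℝ)+1) - min t k)) ≤ t^2 + 1/4 := by
  refine ⟨?_, ?_, ?_⟩
  · intro k
    constructor
    · have : min t (k:ℝ) ≤ min t ((k:ℝ)+1) := by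
        apply min_le_min le_rfl; linarith
      linarith
    · rcases le_total t (k:ℝ) with h1 | h1
      · rw [min_eq_left h1, min_eq_left (by linarith : t ≤ (k:ℝ)+1)]; linarith
      · rw [min_eq_right h1]
        have : min t ((k:ℝ)+1) ≤ (k:ℝ)+1 := min_le_right _ _
        linarith
  · have := Finset.sum_range_sub (f := fun k : ℕ => min t (k:ℝ)) m
    simp only [Nat.cast_add, Nat.cast_one] at this
    rw [this]
    rw [min_eq_left htm]
    simp [min_eq_right ht0]
  · set h : ℕ → ℝ := fun s => (min t (s:ℝ))^2 + if t < (s:ℝ) then (1/4:ℝ) else 0 with hh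
    have key : ∀ k : ℕ, (2*(k:ℝ)+1) * (min t ((k:ℝ)+1) - min t k) ≤ h (k+1) - h k := by
      intro k
      have hcast : ((k+1:ℕ):ℝ) = (k:ℝ)+1 := by push_cast; ring
      simp only [hh, hcast]
      rcases le_total t (k:ℝ) with h1 | h1
      · rw [min_eq_left h1, min_eq_left (by linarith : t ≤ (k:ℝ)+1)]
        split_ifs <;> linarith
      · rw [min_eq_right h1]
        rcases le_total t ((k:ℝ)+1) with h2 | h2
        · rw [min_eq_left h2]
          split_ifs <;> nlinarith [sq_nonneg (t - (k:ℝ) - 1/2)]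
        · rw [min_eq_right h2]
          have hi1 : ¬ t < (k:ℝ)+1 := not_lt.mpr h2
          have hi2 : ¬ t < (k:ℝ) := not_lt.mpr h1
          simp [hi1, hi2]
          nlinarith
    calc ∑ k ∈ Finset.range m, (2*(k:ℝ)+1) * (min t ((k:ℝ)+1) - min t k)
        ≤ ∑ k ∈ Finset.range m, (h (k+1) - h k) :=
          Finset.sum_le_sum (fun k _ => key k)
      _ = h m - h 0 := Finset.sum_range_sub h m
      _ ≤ t^2 + 1/4 := by
          simp only [hh]
          rw [min_eq_left htm]
          have : min t ((0:ℕ):ℝ) = 0 := by simpa using min_eq_right ht0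
          rw [this]
          have : ¬ t < ((0:ℕ):ℝ) := by simpa using ht0
          simp only [this, if_neg this]
          split_ifs <;> nlinarith



/-- With `d_j^k = Ω σ_j/m`, `f_j^k = 2k−1`, and `β(x,Δ)` the maximum of
`Σ_j Σ_k d_j^k x_j z_j^k` over `z ∈ [0,1]^{n×m}` with `Σ_j Σ_k f_j^k z_j^k ≤ Δ`:
for every `x ∈ {0,1}^n`, `β(x, m² + n/4) ≥ Ω·√(Σ_j σ_j² x_j²)`.  Consequently, every
`x ∈ {0,1}^n` with `Σ_j â_j x_j + β(x, m² + n/4) ≤ b` also satisfies the second-order cone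
constraint `Σ_j â_j x_j + Ω·√(Σ_j σ_j² x_j²) ≤ b`. -/
theorem stmt_8 (n m : ℕ) (hn : 0 < n) (hm : 0 < m) (Ω : ℝ) (hΩ : 0 < Ω)
    (σ : Fin n → ℝ) (hσ : ∀ j, 0 ≤ σ j)
    (x : Fin n → ℝ) (hx : ∀ j, x j = 0 ∨ x j = 1) (β : ℝ)
    (hβ : IsGreatest
      {v : ℝ | ∃ z : Fin n → Fin m → ℝ,
        (∀ j k, 0 ≤ z j k ∧ z j k ≤ 1) ∧
        (∑ j, ∑ k : Fin m, (2 * ((k : ℕ) : ℝ) + 1) * z j k) ≤ (m : ℝ) ^ 2 + n / 4 ∧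
        v = ∑ j, ∑ k : Fin m, Ω * σ j / m * x j * z j k} β) :
    Ω * Real.sqrt (∑ j, σ j ^ 2 * x j ^ 2) ≤ β ∧
    (∀ (ahat : Fin n → ℝ) (b : ℝ),
      (∑ j, ahat j * x j) + β ≤ b →
      (∑ j, ahat j * x j) + Ω * Real.sqrt (∑ j, σ j ^ 2 * x j ^ 2) ≤ b) := by
  have hmain : Ω * Real.sqrt (∑ j, σ j ^ 2 * x j ^ 2) ≤ β := by
    set S : ℝ := ∑ j, σ j ^ 2 * x j ^ 2 with hSdef
    have hterm : ∀ j, 0 ≤ σ j ^ 2 * x j ^ 2 := fun j => by positivity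
    have hS0 : 0 ≤ S := Finset.sum_nonneg fun j _ => hterm j
    rcases eq_or_lt_of_le hS0 with hS | hS
    · -- S = 0 case: use z = 0
      rw [← hS, Real.sqrt_zero, mul_zero]
      apply hβ.2
      refine ⟨fun _ _ => 0, fun j k => ⟨le_rfl, zero_le_one⟩, ?_, by simp⟩
      simp
      positivity
    · set s : ℝ := Real.sqrt S with hsdef
      have hs : 0 < s := Real.sqrt_pos.mpr hS
      have hss : s ^ 2 = S := Real.sq_sqrt hS0
      set t : Fin n → ℝ := fun j => m * σ j * x j / s with htdef
      have hxj : ∀ j, 0 ≤ x j := fun j => by rcases hx j with h | h <;> rw [h] <;> norm_num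
      have ht0 : ∀ j, 0 ≤ t j := fun j => by
        apply div_nonneg _ hs.le
        have := hσ j; have := hxj j; positivity
      have htm : ∀ j, t j ≤ m := by
        intro j
        rw [htdef]
        rw [div_le_iff₀ hs]
        have hsx : σ j * x j ≤ s := by
          have h1 : (σ j * x j) ^ 2 ≤ S := by
            have := Finset.single_le_sum (f := fun j => σ j ^ 2 * x j ^ 2)
              (fun j _ => hterm j) (Finset.mem_univ j)
            calc (σ j * x j)^2 = σ j ^2 * x j ^2 := by ring
              _ ≤ S := this
          have h2 : 0 ≤ σ j * x j := mul_nonneg (hσ j) (hxj j)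
          nlinarith
        have hm' : (0:ℝ) ≤ m := Nat.cast_nonneg m
        calc (m:ℝ) * σ j * x j = m * (σ j * x j) := by ring
          _ ≤ m * s := by apply mul_le_mul_of_nonneg_left hsx hm'
      -- define z
      set z : Fin n → Fin m → ℝ := fun j k => min (t j) ((k:ℕ)+1) - min (t j) (k:ℕ) with hzdef
      have haux := fun j => aux_clamp m (t j) (ht0 j) (htm j)
      have hzsum : ∀ j, ∑ k : Fin m, z j k = t j := by
        intro j
        rw [Fin.sum_univ_eq_sum_range (fun k => min (t j) ((k:ℝ)+1) - min (t j) (k:ℝ)) m]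
        exact (haux j).2.1
      have hmc : (0:ℝ) < m := Nat.cast_pos.mpr hm
      refine hβ.2 ⟨z, fun j k => (haux j).1 k, ?_, ?_⟩
      · -- budget
        have h1 : ∀ j : Fin n, ∑ k : Fin m, (2 * ((k:ℕ):ℝ) + 1) * z j k ≤ t j ^ 2 + 1/4 := by
          intro j
          rw [Fin.sum_univ_eq_sum_range (fun k => (2 * (k:ℝ) + 1) * (min (t j) ((k:ℝ)+1) - min (t j) (k:ℝ))) m]
          exact (haux j).2.2
        calc ∑ j, ∑ k : Fin m, (2 * ((k:ℕ):ℝ) + 1) * z j k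
            ≤ ∑ j, (t j ^ 2 + 1/4) := Finset.sum_le_sum fun j _ => h1 j
          _ = (∑ j, t j ^ 2) + n/4 := by
              rw [Finset.sum_add_distrib]
              simp [Finset.card_univ]
              ring
          _ = (m:ℝ)^2 + n/4 := by
              congr 1
              have : ∀ j : Fin n, t j ^ 2 = (m:ℝ)^2 / S * (σ j ^2 * x j ^2) := by
                intro j
                rw [htdef]
                field_simp
                rw [← hss]
              rw [Finset.sum_congr rfl (fun j _ => this j), ← Finset.mul_sum, ← hSdef]
              field_simp
      · -- value
        have h2 : ∀ j : Fin n, ∑ k : Fin m, Ω * σ j / m * x j * z j k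
            = Ω * σ j / m * x j * t j := by
          intro j
          rw [← Finset.mul_sum, hzsum j]
        rw [Finset.sum_congr rfl (fun j _ => h2 j)]
        have h3 : ∀ j : Fin n, Ω * σ j / m * x j * t j = Ω / s * (σ j ^2 * x j ^2) := by
          intro j
          rw [htdef]
          field_simp
        rw [Finset.sum_congr rfl (fun j _ => h3 j), ← Finset.mul_sum, ← hSdef]
        rw [← hss]
        field_simp
  refine ⟨hmain, fun ahat b hab => ?_⟩
  linarith
end

section
/- Let n be a positive integer, ρ ∈ [1/2, 1), and let Ω ≥ 0 satisfy Φ(Ω) = ρ, where Φ is the cumulative distribution function of the standard normal distribution. Let σ_1,…,σ_n ≥ 0, â_1,…,â_n and b be reals, let m be a positive integer with m ≥ √n/2, and set d_j^k = Ω·σ_j/m, f_j^k = 2k−1. Let a_1,…,a_n be independent random variables on a probability space with a_j normally distributed with mean â_j and variance σ_j². Then for every x ∈ {0,1}^n satisfying Σ_j â_j x_j + β(x, m²) ≤ b, the probability P(Σ_j a_j x_j ≤ b) satisfies ρ − P(Σ_j a_j x_j ≤ b) ≤ (1/√(2π))·Ω·(1 − √(1 − n/(4m²)))·exp(−(1/2)·Ω²·(1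 − n/(4m²))). -/
/-!
Under the normal model `S = ∑ⱼ aⱼ xⱼ` is Gaussian with mean `∑ⱼ âⱼ xⱼ` and standard deviation
`s = ‖(σⱼ xⱼ)ⱼ‖₂`. Pouring `tⱼ = m r σⱼ xⱼ / s` units, with `r = √(1 - n / (4m²))`, into the
slots `k = 0, …, m - 1` of item `j`, cheapest first, costs at most `tⱼ² + 1/4`, so at most
`m² r² + n/4 = m²` in total, and earns `Ω r s`; hence `β ≥ Ω r s`. Feasibility then gives
`P(S ≤ b) ≥ Φ(Ω r)`, and `ρ - Φ(Ω r) = Φ(Ω) - Φ(Ω r) ≤ Ω (1 - r) φ(Ω r)` because the density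
`φ` decreases on `[0, ∞)`.
-/

open MeasureTheory ProbabilityTheory Finset Set Real

section Gaussian

variable {Ω : Type*} [MeasurableSpace Ω] {P : Measure Ω} [IsProbabilityMeasure P]

lemma map_finsetSum_eq_gaussianReal_of_iIndepFun {ι : Type*} {X : ι → Ω → ℝ}
    (hX : ∀ i, Measurable (X i)) (hind : iIndepFun X P) {μ : ι → ℝ} {v : ι → NNReal}
    (hlaw : ∀ i, P.map (X i) = gaussianReal (μ i) (v i)) (s : Finset ι) :
    P.map (∑ i ∈ s, X i) = gaussianReal (∑ i ∈ s, μ i) (∑ i ∈ s, v i) := by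
  classical
  induction s using Finset.induction_on with
  | empty =>
    rw [sum_empty, sum_empty, sum_empty, gaussianReal_zero_var, Pi.zero_def, Measure.map_const,
      measure_univ, one_smul]
  | insert i s hi ih =>
    rw [sum_insert hi, sum_insert hi, sum_insert hi]
    exact gaussianReal_add_gaussianReal_of_indepFun
      (hind.indepFun_finsetSum_of_notMem hX hi).symm (hlaw i) ih

lemma map_sum_mul_eq_gaussianReal_of_iIndepFun {ι : Type*} [Fintype ι] {X : ι → Ω → ℝ}
    (hX : ∀ i, Measurable (X i)) (hind : iIndepFun X P) {μ σ : ι → ℝ}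
    (hlaw : ∀ i, P.map (X i) = gaussianReal (μ i) ⟨σ i ^ 2, sq_nonneg _⟩) (x : ι → ℝ) :
    P.map (fun ω ↦ ∑ i, X i ω * x i) =
      gaussianReal (∑ i, μ i * x i) (∑ i, (x i * σ i) ^ 2).toNNReal := by
  have hlaw' (i : ι) : P.map (fun ω ↦ X i ω * x i) =
      gaussianReal (μ i * x i) ((x i * σ i) ^ 2).toNNReal := by
    rw [← Function.comp_def (· * x i), ← Measure.map_map (measurable_mul_const _) (hX i), hlaw i]
    refine (gaussianReal_map_mul_const (x i)).trans (congrArg₂ _ (mul_comm _ _) ?_)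
    ext
    change x i ^ 2 * σ i ^ 2 = _
    rw [Real.coe_toNNReal _ (sq_nonneg _), mul_pow]
  rw [Real.toNNReal_sum_of_nonneg fun i _ ↦ sq_nonneg _]
  convert map_finsetSum_eq_gaussianReal_of_iIndepFun (fun i ↦ (hX i).mul_const (x i))
    (hind.comp _ fun i ↦ measurable_mul_const (x i)) hlaw' univ using 2
  ext ω
  simp only [Finset.sum_apply]

lemma gaussianReal_Iic_le_gaussianReal_Iic {μ b c : ℝ} {v : NNReal}
    (h : μ + √(v : ℝ) * c ≤ b) :
    gaussianReal 0 1 (Iic c) ≤ gaussianReal μ v (Iic b) := by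
  have hstd : gaussianReal μ v = (gaussianReal 0 1).map (fun y ↦ μ + √(v : ℝ) * y) := by
    rw [← Function.comp_def (μ + ·), ← Measure.map_map (measurable_const_add μ)
      (measurable_const_mul _), gaussianReal_map_const_mul, gaussianReal_map_const_add]
    congr 1
    · ring
    · ext; simp
  rw [hstd, Measure.map_apply (by fun_prop) measurableSet_Iic]
  refine measure_mono fun y (hy : y ≤ c) ↦ ?_
  show μ + √(v : ℝ) * y ≤ b
  nlinarith [Real.sqrt_nonneg (v : ℝ)]

lemma gaussianPDFReal_le_of_le {μ c y : ℝ} {v : NNReal} (hc : μ ≤ c) (hcy : c ≤ y) :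
    gaussianPDFReal μ v y ≤ gaussianPDFReal μ v c := by
  unfold gaussianPDFReal
  gcongr

lemma gaussianReal_Iic_sub_le {μ c d : ℝ} {v : NNReal} (hv : v ≠ 0) (hc : μ ≤ c) (hcd : c ≤ d) :
    (gaussianReal μ v (Iic d)).toReal - (gaussianReal μ v (Iic c)).toReal ≤
      (d - c) * gaussianPDFReal μ v c := by
  have hsplit : (gaussianReal μ v (Iic d)).toReal =
      (gaussianReal μ v (Iic c)).toReal + (gaussianReal μ v (Ioc c d)).toReal := by
    rw [← ENNReal.toReal_add (measure_ne_top _ _) (measure_ne_top _ _),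
      ← measure_union (Iic_disjoint_Ioc le_rfl) measurableSet_Ioc, Iic_union_Ioc_eq_Iic hcd]
  rw [hsplit, add_sub_cancel_left, gaussianReal_apply_eq_integral μ hv,
    ENNReal.toReal_ofReal (setIntegral_nonneg measurableSet_Ioc fun y _ ↦
      gaussianPDFReal_nonneg μ v y)]
  calc ∫ y in Ioc c d, gaussianPDFReal μ v y
      ≤ ∫ _ in Ioc c d, gaussianPDFReal μ v c :=
        setIntegral_mono_on (integrable_gaussianPDFReal μ v).integrableOn
          (integrableOn_const measure_Ioc_lt_top.ne) measurableSet_Ioc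
          fun y hy ↦ gaussianPDFReal_le_of_le hc hy.1.le
    _ = (d - c) * gaussianPDFReal μ v c := by
        rw [setIntegral_const, Real.volume_real_Ioc_of_le hcd, smul_eq_mul]

end Gaussian

section InnerApproximation

/-- The level of the `k`-th unit slot when `t` units are poured into slots `0, 1, 2, …` in turn. -/
def stairFill (t : ℝ) (k : ℕ) : ℝ := max 0 (min 1 (t - k))

lemma stairFill_nonneg (t : ℝ) (k : ℕ) : 0 ≤ stairFill t k := le_max_left _ _

lemma stairFill_le_one (t : ℝ) (k : ℕ) : stairFill t k ≤ 1 :=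
  max_le zero_le_one (min_le_left _ _)

lemma stairFill_of_le {t : ℝ} {k : ℕ} (h : t ≤ k) : stairFill t k = 0 := by
  unfold stairFill; grind

lemma stairFill_of_add_one_le {t : ℝ} {k : ℕ} (h : k + 1 ≤ t) : stairFill t k = 1 := by
  unfold stairFill; grind

lemma min_le_sum_stairFill (t : ℝ) (m : ℕ) : min t m ≤ ∑ k ∈ range m, stairFill t k := by
  induction m with
  | zero => simp
  | succ m ih =>
    have step : min t (m + 1) ≤ min t m + stairFill t m := by unfold stairFill; grind
    rw [sum_range_succ, Nat.cast_succ]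
    linarith

lemma sum_odd_mul_stairFill_of_le {t : ℝ} {m : ℕ} (h : m ≤ t) :
    ∑ k ∈ range m, (2 * (k : ℝ) + 1) * stairFill t k = m ^ 2 := by
  induction m with
  | zero => simp
  | succ m ih =>
    push_cast at h
    rw [sum_range_succ, ih (by linarith), stairFill_of_add_one_le h]
    push_cast
    ring

lemma odd_mul_stairFill_le {t : ℝ} {k : ℕ} (h : k ≤ t) :
    (2 * (k : ℝ) + 1) * stairFill t k ≤ t ^ 2 + 1 / 4 - k ^ 2 := by
  unfold stairFill
  rcases le_total 1 (t - k) with h' | h'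
  · rw [min_eq_left h', max_eq_right zero_le_one]
    nlinarith
  · rw [min_eq_right h', max_eq_right (by linarith)]
    nlinarith [sq_nonneg (t - k - 1 / 2)]

lemma sum_odd_mul_stairFill_le (t : ℝ) (m : ℕ) :
    ∑ k ∈ range m, (2 * (k : ℝ) + 1) * stairFill t k ≤ t ^ 2 + 1 / 4 := by
  induction m with
  | zero => simp only [sum_range_zero]; positivity
  | succ m ih =>
    rw [sum_range_succ]
    rcases le_total t m with h | h
    · rw [stairFill_of_le h, mul_zero, add_zero]
      exact ih
    · rw [sum_odd_mul_stairFill_of_le h]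
      linarith [odd_mul_stairFill_le h]

variable {ι : Type*} [Fintype ι]

/-- With `c j = d_j x_j`, `β(x, m²)` is the greatest element of this set. -/
def innerApproxValues (m : ℕ) (c : ι → ℝ) : Set ℝ :=
  {v | ∃ z : ι → Fin m → ℝ, (∀ j k, 0 ≤ z j k ∧ z j k ≤ 1) ∧
    (∑ j, ∑ k : Fin m, (2 * ((k : ℕ) : ℝ) + 1) * z j k) ≤ (m : ℝ) ^ 2 ∧
    v = ∑ j, ∑ k : Fin m, c j * z j k}

lemma sum_mul_le_of_mem_upperBounds {m : ℕ} {c t : ι → ℝ} {β : ℝ} (hc : ∀ j, 0 ≤ c j)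
    (ht : ∀ j, 0 ≤ t j) (hcost : ∑ j, t j ^ 2 + Fintype.card ι / 4 ≤ (m : ℝ) ^ 2)
    (hβ : β ∈ upperBounds (innerApproxValues m c)) :
    ∑ j, c j * t j ≤ β := by
  have hsum (j : ι) : ∑ k : Fin m, stairFill (t j) k = ∑ k ∈ range m, stairFill (t j) k :=
    Fin.sum_univ_eq_sum_range (stairFill (t j)) m
  have htm (j : ι) : t j ≤ m := by
    refine (pow_le_pow_iff_left₀ (ht j) m.cast_nonneg two_ne_zero).1 ?_
    have := single_le_sum (fun i _ ↦ sq_nonneg (t i)) (mem_univ j)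
    have : (0 : ℝ) ≤ Fintype.card ι / 4 := by positivity
    linarith
  refine le_trans ?_ (hβ ⟨fun j k ↦ stairFill (t j) k,
    fun j k ↦ ⟨stairFill_nonneg _ _, stairFill_le_one _ _⟩, ?_, rfl⟩)
  · refine sum_le_sum fun j _ ↦ ?_
    rw [← mul_sum, hsum]
    have := min_le_sum_stairFill (t j) m
    rw [min_eq_left (htm j)] at this
    exact mul_le_mul_of_nonneg_left this (hc j)
  · calc ∑ j, ∑ k : Fin m, (2 * ((k : ℕ) : ℝ) + 1) * stairFill (t j) k
        ≤ ∑ j, (t j ^ 2 + 1 / 4) := sum_le_sum fun j _ ↦ by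
          rw [Fin.sum_univ_eq_sum_range (fun k ↦ (2 * (k : ℝ) + 1) * stairFill (t j) k) m]
          exact sum_odd_mul_stairFill_le (t j) m
      _ = ∑ j, t j ^ 2 + Fintype.card ι / 4 := by
          rw [sum_add_distrib, sum_const, card_univ, nsmul_eq_mul]
          ring
      _ ≤ (m : ℝ) ^ 2 := hcost

lemma mul_sqrt_sum_sq_le_of_mem_upperBounds {m : ℕ} {c : ι → ℝ} {T β : ℝ} (hc : ∀ j, 0 ≤ c j)
    (hT : 0 ≤ T) (hTm : T ^ 2 + Fintype.card ι / 4 ≤ (m : ℝ) ^ 2)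
    (hβ : β ∈ upperBounds (innerApproxValues m c)) :
    T * √(∑ j, c j ^ 2) ≤ β := by
  set s := √(∑ j, c j ^ 2)
  have hs : s ^ 2 = ∑ j, c j ^ 2 := Real.sq_sqrt (sum_nonneg fun j _ ↦ sq_nonneg (c j))
  -- the equality case of Cauchy–Schwarz: `t` is parallel to `c` with Euclidean norm `T`
  let t j := T * c j / s
  have hval : ∑ j, c j * t j = T * s :=
    calc ∑ j, c j * t j = T * (∑ j, c j ^ 2) / s := by
          rw [mul_sum, sum_div]
          exact sum_congr rfl fun j _ ↦ by ring
      _ = T * s := by rw [← hs, sq, mul_div_assoc, mul_self_div_self]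
  have hcost : ∑ j, t j ^ 2 ≤ T ^ 2 :=
    calc ∑ j, t j ^ 2 = T ^ 2 * ((∑ j, c j ^ 2) / s ^ 2) := by
          rw [mul_div_assoc', mul_sum, sum_div]
          exact sum_congr rfl fun j _ ↦ by ring
      _ ≤ T ^ 2 := by
          rw [← hs]
          exact mul_le_of_le_one_right (sq_nonneg T) (div_self_le_one _)
  rw [← hval]
  exact sum_mul_le_of_mem_upperBounds hc
    (fun j ↦ div_nonneg (mul_nonneg hT (hc j)) (Real.sqrt_nonneg _)) (by linarith) hβ

lemma one_sub_div_four_mul_sq_nonneg {n m : ℝ} (hn : 0 ≤ n) (h : √n / 2 ≤ m) :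
    0 ≤ 1 - n / (4 * m ^ 2) := by
  refine sub_nonneg.2 (div_le_one_of_le₀ ?_ (by positivity))
  nlinarith [Real.sq_sqrt hn, Real.sqrt_nonneg n]

lemma mul_sqrt_mul_sqrt_le_of_mem_upperBounds {n m : ℕ} (hm : 0 < m) (hnm : √n / 2 ≤ (m : ℝ))
    {Ω : ℝ} (hΩ : 0 ≤ Ω) {σ x : Fin n → ℝ} (hσ : ∀ j, 0 ≤ σ j) (hx : ∀ j, 0 ≤ x j) {β : ℝ}
    (hβ : β ∈ upperBounds (innerApproxValues m fun j ↦ Ω * σ j / m * x j)) :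
    Ω * √(1 - n / (4 * m ^ 2)) * √(∑ j, (x j * σ j) ^ 2) ≤ β := by
  have hmR : (0 : ℝ) < m := Nat.cast_pos.2 hm
  have hq := one_sub_div_four_mul_sq_nonneg n.cast_nonneg hnm
  have hnorm : √(∑ j, (Ω * σ j / m * x j) ^ 2) = Ω / m * √(∑ j, (x j * σ j) ^ 2) := by
    rw [← Real.sqrt_sq (div_nonneg hΩ hmR.le), ← Real.sqrt_mul (sq_nonneg _), mul_sum]
    exact congrArg _ (sum_congr rfl fun j _ ↦ by ring)
  have := mul_sqrt_sum_sq_le_of_mem_upperBounds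
    (fun j ↦ mul_nonneg (div_nonneg (mul_nonneg hΩ (hσ j)) hmR.le) (hx j))
    (mul_nonneg hmR.le (Real.sqrt_nonneg _))
    (le_of_eq (by rw [Fintype.card_fin, mul_pow, Real.sq_sqrt hq]; field_simp; ring)) hβ
  rw [hnorm] at this
  convert this using 1
  field_simp

end InnerApproximation

theorem stmt_10_general {Ωs : Type*} [MeasurableSpace Ωs] (P : Measure Ωs) [IsProbabilityMeasure P]
    (n : ℕ) (ρ : ℝ)
    (Ω : ℝ) (hΩ : 0 ≤ Ω)
    (hΦ : ((gaussianReal 0 1) (Set.Iic Ω)).toReal = ρ)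
    (σ : Fin n → ℝ) (hσ : ∀ j, 0 ≤ σ j) (ahat : Fin n → ℝ) (b : ℝ)
    (m : ℕ) (hm : 0 < m) (hmn : Real.sqrt n / 2 ≤ (m : ℝ))
    (a : Fin n → Ωs → ℝ) (hmeas : ∀ j, Measurable (a j))
    (hindep : iIndepFun a P)
    (hdist : ∀ j, Measure.map (a j) P = gaussianReal (ahat j) ⟨σ j ^ 2, sq_nonneg _⟩)
    (x : Fin n → ℝ) (hx : ∀ j, x j = 0 ∨ x j = 1) (β : ℝ)
    (hβ : IsGreatest
      {v : ℝ | ∃ z : Fin n → Fin m → ℝ,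
        (∀ j k, 0 ≤ z j k ∧ z j k ≤ 1) ∧
        (∑ j, ∑ k : Fin m, (2 * ((k : ℕ) : ℝ) + 1) * z j k) ≤ (m : ℝ) ^ 2 ∧
        v = ∑ j, ∑ k : Fin m, Ω * σ j / m * x j * z j k} β)
    (hfeas : (∑ j, ahat j * x j) + β ≤ b) :
    ρ - (P {ω | (∑ j, a j ω * x j) ≤ b}).toReal ≤
      1 / Real.sqrt (2 * Real.pi) * Ω * (1 - Real.sqrt (1 - n / (4 * m ^ 2))) *
        Real.exp (-(1 / 2) * Ω ^ 2 * (1 - n / (4 * m ^ 2))) := by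
  have hq := one_sub_div_four_mul_sq_nonneg n.cast_nonneg hmn
  set q : ℝ := 1 - n / (4 * m ^ 2)
  set r := √q
  have hβ' : Ω * r * √(∑ j, (x j * σ j) ^ 2) ≤ β :=
    mul_sqrt_mul_sqrt_le_of_mem_upperBounds hm hmn hΩ hσ
      (fun j ↦ (hx j).elim (fun h ↦ h.ge) (fun h ↦ h ▸ zero_le_one)) hβ.2
  have hcdf : (gaussianReal 0 1 (Iic (Ω * r))).toReal ≤ (P {ω | ∑ j, a j ω * x j ≤ b}).toReal := by
    have hS : {ω | ∑ j, a j ω * x j ≤ b} = (fun ω ↦ ∑ j, a j ω * x j) ⁻¹' Iic b := rfl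
    rw [hS, ← Measure.map_apply (by fun_prop) measurableSet_Iic,
      map_sum_mul_eq_gaussianReal_of_iIndepFun hmeas hindep hdist x]
    refine ENNReal.toReal_mono (measure_ne_top _ _) (gaussianReal_Iic_le_gaussianReal_Iic ?_)
    rw [Real.coe_toNNReal _ (sum_nonneg fun j _ ↦ sq_nonneg _)]
    linarith
  have hdiff := gaussianReal_Iic_sub_le one_ne_zero (mul_nonneg hΩ (Real.sqrt_nonneg q))
    (mul_le_of_le_one_right hΩ (Real.sqrt_le_one.2 (sub_le_self 1 (by positivity))))
  have hpdf : gaussianPDFReal 0 1 (Ω * r) = 1 / √(2 * π) * Real.exp (-(1 / 2) * Ω ^ 2 * q) := by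
    simp only [gaussianPDFReal, NNReal.coe_one, mul_one, sub_zero, mul_pow, r, Real.sq_sqrt hq]
    ring_nf
  calc ρ - (P {ω | ∑ j, a j ω * x j ≤ b}).toReal
      ≤ (gaussianReal 0 1 (Iic Ω)).toReal - (gaussianReal 0 1 (Iic (Ω * r))).toReal := by
        linarith
    _ ≤ (Ω - Ω * r) * gaussianPDFReal 0 1 (Ω * r) := hdiff
    _ = _ := by rw [hpdf]; ring

/-- **Proposition 2.** Probability guarantee for feasible solutions to
(RKPm) with the inner polyhedral approximation, for independent normal weights.
`Ω = Φ⁻¹(ρ)` (expressed by `Φ(Ω) = ρ` with `Φ` the standard normal CDF), `m ≥ √n/2`,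
`β(x, m²)` is the inner-approximation robust term, and `x ∈ {0,1}^n` is feasible to (RKPm).
Then `ρ − P(Σ_j a_j x_j ≤ b)` is at most
`(1/√(2π))·Ω·(1 − √(1 − n/(4m²)))·exp(−½·Ω²·(1 − n/(4m²)))`. -/
theorem stmt_10 {Ωs : Type*} [MeasurableSpace Ωs] (P : Measure Ωs) [IsProbabilityMeasure P]
    (n : ℕ) (hn : 0 < n) (ρ : ℝ) (hρ : 1 / 2 ≤ ρ) (hρ' : ρ < 1)
    (Ω : ℝ) (hΩ : 0 ≤ Ω)
    (hΦ : ((gaussianReal 0 1) (Set.Iic Ω)).toReal = ρ)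
    (σ : Fin n → ℝ) (hσ : ∀ j, 0 ≤ σ j) (ahat : Fin n → ℝ) (b : ℝ)
    (m : ℕ) (hm : 0 < m) (hmn : Real.sqrt n / 2 ≤ (m : ℝ))
    (a : Fin n → Ωs → ℝ) (hmeas : ∀ j, Measurable (a j))
    (hindep : iIndepFun a P)
    (hdist : ∀ j, Measure.map (a j) P = gaussianReal (ahat j) ⟨σ j ^ 2, sq_nonneg _⟩)
    (x : Fin n → ℝ) (hx : ∀ j, x j = 0 ∨ x j = 1) (β : ℝ)
    (hβ : IsGreatest
      {v : ℝ | ∃ z : Fin n → Fin m → ℝ,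
        (∀ j k, 0 ≤ z j k ∧ z j k ≤ 1) ∧
        (∑ j, ∑ k : Fin m, (2 * ((k : ℕ) : ℝ) + 1) * z j k) ≤ (m : ℝ) ^ 2 ∧
        v = ∑ j, ∑ k : Fin m, Ω * σ j / m * x j * z j k} β)
    (hfeas : (∑ j, ahat j * x j) + β ≤ b) :
    ρ - (P {ω | (∑ j, a j ω * x j) ≤ b}).toReal ≤
      1 / Real.sqrt (2 * Real.pi) * Ω * (1 - Real.sqrt (1 - n / (4 * m ^ 2))) *
        Real.exp (-(1 / 2) * Ω ^ 2 * (1 - n / (4 * m ^ 2))) :=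
  stmt_10_general P n ρ Ω hΩ hΦ σ hσ ahat b m hm hmn a hmeas hindep hdist x hx β hβ hfeas
end

section
/- Let n be a positive integer, Ω ≥ 0, δ > 0, and let m be a positive integer with m ≥ √n/2 and m² ≥ Ω·n/(4·√(2π)·δ). Then (1/√(2π))·Ω·(1 − √(1 − n/(4m²)))·exp(−(1/2)·Ω²·(1 − n/(4m²))) ≤ δ. In particular, the probability-guarantee gap of Proposition 2 is at most δ whenever m ≥ max(√n/2, √(Ω·n/(4√(2π)·δ))), so the minimum number of linear segments m making the gap less than δ is O(√(n/δ)) for fixed Ω. -/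
/-- **Corollary 1, quantitative form.** For `Ω ≥ 0`, `δ > 0` and a positive
integer `m` with `m ≥ √n/2` and `m² ≥ Ω·n/(4√(2π)·δ)`, the probability-guarantee gap bound
of Proposition 2 satisfies
`(1/√(2π))·Ω·(1 − √(1 − n/(4m²)))·exp(−½·Ω²·(1 − n/(4m²))) ≤ δ`;
hence the minimum number of linear segments making the gap at most `δ` is `O(√(n/δ))`. -/
theorem stmt_11 (n : ℕ) (hn : 0 < n) (Ω : ℝ) (hΩ : 0 ≤ Ω) (δ : ℝ) (hδ : 0 < δ)
    (m : ℕ) (hm : 0 < m) (hm1 : Real.sqrt n / 2 ≤ (m : ℝ))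
    (hm2 : Ω * n / (4 * Real.sqrt (2 * Real.pi) * δ) ≤ (m : ℝ) ^ 2) :
    1 / Real.sqrt (2 * Real.pi) * Ω * (1 - Real.sqrt (1 - n / (4 * m ^ 2))) *
      Real.exp (-(1 / 2) * Ω ^ 2 * (1 - n / (4 * m ^ 2))) ≤ δ := by
  have hs : 0 < Real.sqrt (2 * Real.pi) := Real.sqrt_pos.2 (by positivity)
  have hM : (0:ℝ) < (m:ℝ) ^ 2 := by positivity
  -- n ≤ 4 m^2
  have hsn : Real.sqrt n ≤ 2 * (m:ℝ) := by linarith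
  have hn4 : (n:ℝ) ≤ 4 * (m:ℝ) ^ 2 := by
    have := pow_le_pow_left₀ (Real.sqrt_nonneg _) hsn 2
    rw [Real.sq_sqrt (by positivity : (0:ℝ) ≤ (n:ℝ))] at this
    nlinarith
  set t : ℝ := (n:ℝ) / (4 * (m:ℝ) ^ 2) with ht
  have ht0 : 0 ≤ t := by positivity
  have ht1 : t ≤ 1 := by
    rw [ht, div_le_one (by positivity)]; exact hn4
  have h1t : 0 ≤ 1 - t := by linarith
  -- 1 - √(1-t) ≤ t
  have hstep : 1 - Real.sqrt (1 - t) ≤ t := by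
    have : 1 - t ≤ Real.sqrt (1 - t) := by
      rw [show Real.sqrt (1 - t) = Real.sqrt (1 - t) from rfl]
      nlinarith [Real.sq_sqrt h1t, Real.sqrt_nonneg (1 - t),
        sq_nonneg (Real.sqrt (1 - t) - (1 - t))]
    linarith
  have hexp : Real.exp (-(1 / 2) * Ω ^ 2 * (1 - t)) ≤ 1 := by
    apply Real.exp_le_one_iff.2
    nlinarith [sq_nonneg Ω]
  have hLHS : 1 / Real.sqrt (2 * Real.pi) * Ω * (1 - Real.sqrt (1 - t)) *
      Real.exp (-(1 / 2) * Ω ^ 2 * (1 - t)) ≤ 1 / Real.sqrt (2 * Real.pi) * Ω * t := by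
    have h1 : 0 ≤ 1 / Real.sqrt (2 * Real.pi) * Ω := by positivity
    have h2 : 0 ≤ 1 - Real.sqrt (1 - t) := by
      have : Real.sqrt (1 - t) ≤ 1 := Real.sqrt_le_one.2 (by linarith)
      linarith
    calc 1 / Real.sqrt (2 * Real.pi) * Ω * (1 - Real.sqrt (1 - t)) *
          Real.exp (-(1 / 2) * Ω ^ 2 * (1 - t))
        ≤ 1 / Real.sqrt (2 * Real.pi) * Ω * (1 - Real.sqrt (1 - t)) * 1 := by
          apply mul_le_mul_of_nonneg_left hexp (by positivity)
      _ = 1 / Real.sqrt (2 * Real.pi) * Ω * (1 - Real.sqrt (1 - t)) := by ring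
      _ ≤ 1 / Real.sqrt (2 * Real.pi) * Ω * t := mul_le_mul_of_nonneg_left hstep h1
  have hfinal : 1 / Real.sqrt (2 * Real.pi) * Ω * t ≤ δ := by
    rw [ht, show 1 / Real.sqrt (2 * Real.pi) * Ω * ((n:ℝ) / (4 * (m:ℝ) ^ 2)) =
      Ω * n / (Real.sqrt (2 * Real.pi) * (4 * (m:ℝ) ^ 2)) by field_simp]
    rw [div_le_iff₀ (by positivity)]
    rw [div_le_iff₀ (by positivity)] at hm2
    nlinarith [hs, hδ, hM]
  calc _ ≤ 1 / Real.sqrt (2 * Real.pi) * Ω * t := hLHS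
    _ ≤ δ := hfinal
end

section
/- Let n be a positive integer, ρ ∈ (0,1), and set Ω = √(ρ/(1−ρ)). Let σ_1,…,σ_n ≥ 0, â_1,…,â_n and b be reals, let m be a positive integer with m ≥ √n/2, and set d_j^k = Ω·σ_j/m, f_j^k = 2k−1. Let a_1,…,a_n be independent real random variables on a probability space, each square-integrable, with E[a_j] = â_j and Var(a_j) = σ_j². Then for every x ∈ {0,1}^n satisfying Σ_j â_j x_j + β(x, m²) ≤ b, the probability P(Σ_j a_j x_j ≤ b) satisfies ρ − P(Σ_j a_j x_j ≤ b) ≤ ρ(1−ρ)/(4m²/n − ρ). -/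
/-
Let `S = Σ aⱼ xⱼ`, with mean `Σ âⱼ xⱼ` and, by independence, variance `V = Σ σⱼ² xⱼ²`.
The scaled vector `tⱼ = √(m² - n/4) · σⱼ xⱼ / √V` has Euclidean length at most `√(m² - n/4)`,
and filling the unit slots `zⱼ⁰, zⱼ¹, …` greedily up to `tⱼ` costs at most `tⱼ² + 1/4` for each
`j`, hence at most `m²` in total. So `β ≥ K := (Ω/m) √(m² - n/4) √V`, and feasibility forces
`P(S > b) ≤ P(S > E S + K)`, which Cantelli's inequality bounds by `V / (V + K²)`.
Since `K² = κ V` with `κ = ρ/(1-ρ) · (1 - n/(4m²))`, this is at most `1/(1 + κ)`, and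
`ρ - 1 + 1/(1 + κ) = ρ(1-ρ)/(4m²/n - ρ)`.
-/

open MeasureTheory ProbabilityTheory Finset

namespace ProbabilityTheory

variable {Ω : Type*} [MeasurableSpace Ω] {P : Measure Ω}

theorem variance_sum_mul_const {ι : Type*} [Fintype ι] {X : ι → Ω → ℝ} (hX : iIndepFun X P)
    (hX₂ : ∀ j, MemLp (X j) 2 P) (x : ι → ℝ) :
    Var[fun ω => ∑ j, X j ω * x j; P] = ∑ j, Var[X j; P] * x j ^ 2 := by
  have hsum : (fun ω => ∑ j, X j ω * x j) = ∑ j, fun ω => X j ω * x j := by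
    ext ω
    simp
  rw [hsum, IndepFun.variance_sum (fun j _ => (hX₂ j).mul_const (x j))
    fun i _ j _ hij => (hX.indepFun hij).comp (measurable_mul_const _) (measurable_mul_const _)]
  simp only [variance_mul_const]

variable [IsProbabilityMeasure P] {X : Ω → ℝ}

theorem measureReal_ge_integral_add_le (hX : MemLp X 2 P) {c : ℝ} (hc : 0 < c) :
    P.real {ω | P[X] + c ≤ X ω} ≤ Var[X; P] / (Var[X; P] + c ^ 2) := by
  set V := Var[X; P]
  have hV : 0 ≤ V := variance_nonneg X P
  -- Markov's inequality for `(X - E X + t)²`, with the optimal shift `t = V / c`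
  set t := V / c
  have ht : 0 ≤ t := div_nonneg hV hc.le
  set Y := fun ω => X ω + (t - P[X])
  have hY : MemLp Y 2 P := hX.add (memLp_const _)
  have hY_mean : P[Y] = t := by
    rw [integral_add (hX.integrable one_le_two) (integrable_const _), integral_const]
    simp
  have hY_sq : ∫ ω, Y ω ^ 2 ∂P = V + t ^ 2 := by
    have h := variance_eq_sub hY
    rw [variance_add_const hX.aestronglyMeasurable, hY_mean] at h
    simp only [Pi.pow_apply] at h
    linarith
  have hsub : {ω | P[X] + c ≤ X ω} ⊆ {ω | (c + t) ^ 2 ≤ Y ω ^ 2} := fun ω hω =>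
    pow_le_pow_left₀ (add_pos_of_pos_of_nonneg hc ht).le (by simp only [Y]; linarith [hω.out]) 2
  have hmarkov := mul_meas_ge_le_integral_of_nonneg
    (ae_of_all _ fun ω => sq_nonneg (Y ω)) hY.integrable_sq ((c + t) ^ 2)
  calc P.real {ω | P[X] + c ≤ X ω}
      ≤ P.real {ω | (c + t) ^ 2 ≤ Y ω ^ 2} := measureReal_mono hsub
    _ ≤ (V + t ^ 2) / (c + t) ^ 2 := by
        rw [le_div_iff₀ (by positivity), mul_comm, ← hY_sq]
        exact hmarkov
    _ = V / (V + c ^ 2) := by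
        simp only [t]
        field_simp
        ring

theorem measureReal_gt_integral_add_le (hX : MemLp X 2 P) {c : ℝ} (hc : 0 ≤ c) :
    P.real {ω | P[X] + c < X ω} ≤ Var[X; P] / (Var[X; P] + c ^ 2) := by
  rcases hc.lt_or_eq with hc | rfl
  · exact (measureReal_mono fun ω hω => le_of_lt hω.out).trans
      (measureReal_ge_integral_add_le hX hc)
  rcases (variance_nonneg X P).lt_or_eq with hV | hV
  · simp [div_self hV.ne', measureReal_le_one]
  · have hnull : P {ω | P[X] < X ω} = 0 := measure_eq_zero_iff_ae_notMem.2 <|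
      (ae_eq_integral_of_variance_eq_zero hX hV.symm).mono fun ω hω => by simp [hω]
    simp [measureReal_def, hnull, ← hV]

theorem measureReal_gt_integral_add_le_one_div (hX : MemLp X 2 P) {c κ : ℝ} (hc : 0 ≤ c)
    (hκ : 0 ≤ κ) (hcκ : c ^ 2 = κ * Var[X; P]) :
    P.real {ω | P[X] + c < X ω} ≤ 1 / (1 + κ) :=
  calc P.real {ω | P[X] + c < X ω}
      ≤ Var[X; P] / (Var[X; P] + κ * Var[X; P]) := hcκ ▸ measureReal_gt_integral_add_le hX hc
    _ = Var[X; P] / Var[X; P] / (1 + κ) := by rw [← one_add_mul, div_mul_eq_div_div_swap]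
    _ ≤ 1 / (1 + κ) := by gcongr; exact div_self_le_one _

theorem one_sub_measureReal_lt_le (X : Ω → ℝ) (b : ℝ) :
    1 - P.real {ω | b < X ω} ≤ P.real {ω | X ω ≤ b} := by
  have h := measureReal_union_le (μ := P) {ω | X ω ≤ b} {ω | b < X ω}
  have hU : {ω | X ω ≤ b} ∪ {ω | b < X ω} = Set.univ := by
    ext ω
    simp [le_or_gt]
  rw [hU, probReal_univ] at h
  linarith

end ProbabilityTheory

noncomputable def greedyFill (t : ℝ) (k : ℕ) : ℝ := min 1 (max 0 (t - k))

lemma greedyFill_nonneg (t : ℝ) (k : ℕ) : 0 ≤ greedyFill t k :=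
  le_min zero_le_one (le_max_left _ _)

lemma greedyFill_le_one (t : ℝ) (k : ℕ) : greedyFill t k ≤ 1 := min_le_left _ _

lemma greedyFill_eq_zero_of_le {t : ℝ} {k : ℕ} (h : t ≤ k) : greedyFill t k = 0 := by
  simp [greedyFill, max_eq_left (sub_nonpos.2 h)]

lemma greedyFill_eq_one_of_add_one_le {t : ℝ} {k : ℕ} (h : (k : ℝ) + 1 ≤ t) : greedyFill t k = 1 :=
  min_eq_left (le_max_of_le_right (by linarith))

lemma greedyFill_eq_sub {t : ℝ} {k : ℕ} (h₀ : (k : ℝ) ≤ t) (h₁ : t ≤ k + 1) :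
    greedyFill t k = t - k := by
  rw [greedyFill, max_eq_right (by linarith), min_eq_right (by linarith)]

lemma sum_range_mul_greedyFill_of_le (f : ℕ → ℝ) {t : ℝ} {m : ℕ} (h : (m : ℝ) ≤ t) :
    ∑ k ∈ range m, f k * greedyFill t k = ∑ k ∈ range m, f k := by
  refine sum_congr rfl fun k hk => ?_
  have : (k : ℝ) + 1 ≤ m := by exact_mod_cast mem_range.1 hk
  rw [greedyFill_eq_one_of_add_one_le (by linarith), mul_one]

lemma sum_range_greedyFill {t : ℝ} {m : ℕ} (h₀ : 0 ≤ t) (hm : t ≤ m) :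
    ∑ k ∈ range m, greedyFill t k = t := by
  induction m with
  | zero => simp only [Nat.cast_zero] at hm; simp [le_antisymm hm h₀]
  | succ m ih =>
    rw [sum_range_succ]
    rcases le_or_gt t m with h | h
    · rw [ih h, greedyFill_eq_zero_of_le h, add_zero]
    · have hsum := sum_range_mul_greedyFill_of_le (fun _ => 1) h.le
      simp only [one_mul, sum_const, card_range, nsmul_eq_mul, mul_one] at hsum
      rw [hsum, greedyFill_eq_sub h.le (by exact_mod_cast hm)]
      ring

lemma sum_range_odd_eq_sq : ∀ m : ℕ, ∑ k ∈ range m, (2 * (k : ℝ) + 1) = (m : ℝ) ^ 2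
  | 0 => by simp
  | m + 1 => by rw [sum_range_succ, sum_range_odd_eq_sq m]; push_cast; ring

lemma sum_range_odd_mul_greedyFill_le (t : ℝ) (m : ℕ) :
    ∑ k ∈ range m, (2 * (k : ℝ) + 1) * greedyFill t k ≤ t ^ 2 + 1 / 4 := by
  induction m with
  | zero => rw [sum_range_zero]; positivity
  | succ m ih =>
    rw [sum_range_succ]
    rcases le_or_gt t m with h | h
    · rw [greedyFill_eq_zero_of_le h, mul_zero, add_zero]; exact ih
    rw [sum_range_mul_greedyFill_of_le _ h.le, sum_range_odd_eq_sq]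
    rcases le_or_gt t (m + 1) with h' | h'
    · rw [greedyFill_eq_sub h.le h']
      nlinarith [sq_nonneg (t - m - 1 / 2)]
    · rw [greedyFill_eq_one_of_add_one_le h'.le]
      nlinarith

/-- Feasible objective values of the linear program defining `β(x, m²)`, with `w j = d_j^k x_j`.
The slot `k : Fin m` is the paper's `k + 1`, of cost `f_j^(k+1) = 2k + 1`. -/
def knapsackValues {ι : Type*} [Fintype ι] (m : ℕ) (w : ι → ℝ) : Set ℝ :=
  {v | ∃ z : ι → Fin m → ℝ, (∀ j k, 0 ≤ z j k ∧ z j k ≤ 1) ∧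
    ∑ j, ∑ k : Fin m, (2 * ((k : ℕ) : ℝ) + 1) * z j k ≤ (m : ℝ) ^ 2 ∧
    v = ∑ j, ∑ k : Fin m, w j * z j k}

lemma sqrt_mul_sqrt_sum_sq_mem_knapsackValues {ι : Type*} [Fintype ι] {w : ι → ℝ}
    (hw : ∀ j, 0 ≤ w j) {m : ℕ} {s : ℝ} (hs : 0 ≤ s) (hsm : s + Fintype.card ι / 4 ≤ m ^ 2) :
    √s * √(∑ j, w j ^ 2) ∈ knapsackValues m w := by
  set V := ∑ j, w j ^ 2
  have hV : 0 ≤ V := sum_nonneg fun j _ => sq_nonneg (w j)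
  -- scale `w` to Euclidean length `√s`; when `V = 0` this is `t = 0` since `x / 0 = 0`
  set t : ι → ℝ := fun j => √s * w j / √V
  have ht₀ (j : ι) : 0 ≤ t j := by positivity [hw j]
  have htm (j : ι) : t j ≤ m := by
    have hsm' : √s ≤ m := (Real.sqrt_le_left (Nat.cast_nonneg m)).2 <| by
      have : (0 : ℝ) ≤ Fintype.card ι / 4 := by positivity
      linarith
    have hwV : w j ≤ √V :=
      Real.le_sqrt_of_sq_le (single_le_sum (fun i _ => sq_nonneg (w i)) (mem_univ j))
    exact div_le_of_le_mul₀ (Real.sqrt_nonneg _) (Nat.cast_nonneg m)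
      (mul_le_mul hsm' hwV (hw j) (Nat.cast_nonneg m))
  have hsum_sq : ∑ j, t j ^ 2 ≤ s := by
    have (j : ι) : t j ^ 2 = s * (w j ^ 2 / V) := by
      simp only [t, div_pow, mul_pow, Real.sq_sqrt hs, Real.sq_sqrt hV]
      ring
    simp only [this, ← mul_sum, ← sum_div]
    exact mul_le_of_le_one_right hs (div_self_le_one V)
  have hsum_mul : ∑ j, w j * t j = √s * √V := by
    have (j : ι) : w j * t j = √s * (w j ^ 2 / √V) := by simp only [t]; ring
    rw [sum_congr rfl fun j _ => this j, ← mul_sum, ← sum_div]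
    exact congrArg _ Real.div_sqrt
  have hsum_fill (j : ι) : ∑ k : Fin m, greedyFill (t j) k = t j := by
    rw [Fin.sum_univ_eq_sum_range (greedyFill (t j))]
    exact sum_range_greedyFill (ht₀ j) (htm j)
  refine ⟨fun j k => greedyFill (t j) k, fun j k => ⟨greedyFill_nonneg _ _, greedyFill_le_one _ _⟩,
    ?_, ?_⟩
  · calc ∑ j, ∑ k : Fin m, (2 * ((k : ℕ) : ℝ) + 1) * greedyFill (t j) k
        ≤ ∑ j, (t j ^ 2 + 1 / 4) := sum_le_sum fun j _ => by
          rw [Fin.sum_univ_eq_sum_range (fun k => (2 * (k : ℝ) + 1) * greedyFill (t j) k)]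
          exact sum_range_odd_mul_greedyFill_le (t j) m
      _ ≤ s + Fintype.card ι / 4 := by
          rw [sum_add_distrib, sum_const, card_univ, nsmul_eq_mul]
          linarith
      _ ≤ (m : ℝ) ^ 2 := hsm
  · simp only [← mul_sum, hsum_fill, hsum_mul]

lemma sqrt_mem_knapsackValues {ι : Type*} [Fintype ι] {c : ℝ} (hc : 0 ≤ c) {σ x : ι → ℝ}
    (hσ : ∀ j, 0 ≤ σ j) (hx : ∀ j, 0 ≤ x j) {m : ℕ} (hm : 0 < m)
    (hιm : (Fintype.card ι : ℝ) ≤ 4 * m ^ 2) :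
    √(c ^ 2 * (1 - Fintype.card ι / (4 * m ^ 2)) * ∑ j, σ j ^ 2 * x j ^ 2) ∈
      knapsackValues m (fun j => c * σ j / m * x j) := by
  have hm₀ : (0 : ℝ) < m := Nat.cast_pos.2 hm
  have hs : 0 ≤ (m : ℝ) ^ 2 - Fintype.card ι / 4 := by linarith
  convert sqrt_mul_sqrt_sum_sq_mem_knapsackValues (m := m)
    (fun j => mul_nonneg (div_nonneg (mul_nonneg hc (hσ j)) hm₀.le) (hx j)) hs (by simp) using 1
  rw [← Real.sqrt_mul hs, mul_sum, mul_sum]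
  congr 1
  refine sum_congr rfl fun j _ => ?_
  field_simp

lemma sub_one_add_one_div_eq {ρ n N : ℝ} (hρ' : ρ < 1) (hn : 0 < n) (hnN : n ≤ N) :
    ρ - 1 + 1 / (1 + ρ / (1 - ρ) * (1 - n / N)) = ρ * (1 - ρ) / (N / n - ρ) := by
  have hρ₁ : 0 < 1 - ρ := sub_pos.2 hρ'
  have hN : 0 < N := hn.trans_le hnN
  have hNρ : 0 < N - ρ * n := by nlinarith
  have h : 1 + ρ / (1 - ρ) * (1 - n / N) = (N - ρ * n) / ((1 - ρ) * N) := by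
    field_simp
    ring
  rw [h, one_div_div, div_sub' (by positivity)]
  field_simp
  ring

theorem stmt_12_general {Ωs : Type*} [MeasurableSpace Ωs] (P : Measure Ωs) [IsProbabilityMeasure P]
    (n : ℕ) (hn : 0 < n) (ρ : ℝ) (hρ : 0 < ρ) (hρ' : ρ < 1)
    (σ : Fin n → ℝ) (hσ : ∀ j, 0 ≤ σ j) (ahat : Fin n → ℝ) (b : ℝ)
    (m : ℕ) (hmn : Real.sqrt n / 2 ≤ (m : ℝ))
    (a : Fin n → Ωs → ℝ)
    (hindep : iIndepFun a P)
    (hL2 : ∀ j, MemLp (a j) 2 P)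
    (hmean : ∀ j, (∫ ω, a j ω ∂P) = ahat j)
    (hvar : ∀ j, variance (a j) P = σ j ^ 2)
    (x : Fin n → ℝ) (hx : ∀ j, x j = 0 ∨ x j = 1) (β : ℝ)
    (hβ : IsGreatest
      {v : ℝ | ∃ z : Fin n → Fin m → ℝ,
        (∀ j k, 0 ≤ z j k ∧ z j k ≤ 1) ∧
        (∑ j, ∑ k : Fin m, (2 * ((k : ℕ) : ℝ) + 1) * z j k) ≤ (m : ℝ) ^ 2 ∧
        v = ∑ j, ∑ k : Fin m, Real.sqrt (ρ / (1 - ρ)) * σ j / m * x j * z j k} β)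
    (hfeas : (∑ j, ahat j * x j) + β ≤ b) :
    ρ - (P {ω | (∑ j, a j ω * x j) ≤ b}).toReal ≤
      ρ * (1 - ρ) / (4 * (m : ℝ) ^ 2 / n - ρ) := by
  have hn₀ : (0 : ℝ) < n := Nat.cast_pos.2 hn
  have hm : 0 < m := by exact_mod_cast (div_pos (Real.sqrt_pos.2 hn₀) two_pos).trans_le hmn
  have hnm : (n : ℝ) ≤ 4 * m ^ 2 := by nlinarith [Real.sq_sqrt hn₀.le, Real.sqrt_nonneg n]
  set S : Ωs → ℝ := fun ω => ∑ j, a j ω * x j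
  set V := ∑ j, σ j ^ 2 * x j ^ 2
  have hS : MemLp S 2 P := memLp_finsetSum _ fun j _ => (hL2 j).mul_const (x j)
  have hS_mean : P[S] = ∑ j, ahat j * x j := by
    rw [integral_finsetSum _ fun j _ => ((hL2 j).integrable one_le_two).mul_const _]
    simp only [integral_mul_const, hmean]
  have hS_var : Var[S; P] = V := by
    rw [variance_sum_mul_const hindep hL2]
    exact sum_congr rfl fun j _ => by rw [hvar]
  set κ := ρ / (1 - ρ) * (1 - n / (4 * m ^ 2))
  have hκ : 0 ≤ κ := mul_nonneg (div_pos hρ (sub_pos.2 hρ')).le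
    (sub_nonneg.2 <| div_le_one_of_le₀ hnm (by positivity))
  have hKβ : √(κ * V) ≤ β := by
    refine hβ.2 ?_
    have hK := sqrt_mem_knapsackValues (Real.sqrt_nonneg (ρ / (1 - ρ))) hσ (x := x)
      (fun j => by rcases hx j with h | h <;> simp [h]) hm (by simpa using hnm)
    rw [Real.sq_sqrt (div_pos hρ (sub_pos.2 hρ')).le, Fintype.card_fin] at hK
    exact hK
  have htail : P.real {ω | b < S ω} ≤ 1 / (1 + κ) :=
    calc P.real {ω | b < S ω}
        ≤ P.real {ω | P[S] + √(κ * V) < S ω} := measureReal_mono fun ω (hω : b < S ω) => by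
          show P[S] + √(κ * V) < S ω
          linarith
      _ ≤ 1 / (1 + κ) := measureReal_gt_integral_add_le_one_div hS (Real.sqrt_nonneg _) hκ
          (by rw [hS_var, Real.sq_sqrt (by positivity)])
  calc ρ - P.real {ω | S ω ≤ b}
      ≤ ρ - 1 + 1 / (1 + κ) := by linarith [one_sub_measureReal_lt_le (P := P) S b]
    _ = ρ * (1 - ρ) / (4 * (m : ℝ) ^ 2 / n - ρ) := sub_one_add_one_div_eq hρ' hn₀ hnm

/-- **Proposition 4.** Distributionally robust probability guarantee for
feasible solutions to (RKPm) with the inner polyhedral approximation, via Cantelli's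
inequality.  Here `Ω = √(ρ/(1−ρ))`, the weights `a_j` are independent square-integrable
random variables with means `â_j` and variances `σ_j²`, `m ≥ √n/2`, and `x ∈ {0,1}^n`
satisfies `Σ_j â_j x_j + β(x,m²) ≤ b`.  Then
`ρ − P(Σ_j a_j x_j ≤ b) ≤ ρ(1−ρ)/(4m²/n − ρ)`. -/
theorem stmt_12 {Ωs : Type*} [MeasurableSpace Ωs] (P : Measure Ωs) [IsProbabilityMeasure P]
    (n : ℕ) (hn : 0 < n) (ρ : ℝ) (hρ : 0 < ρ) (hρ' : ρ < 1)
    (σ : Fin n → ℝ) (hσ : ∀ j, 0 ≤ σ j) (ahat : Fin n → ℝ) (b : ℝ)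
    (m : ℕ) (hm : 0 < m) (hmn : Real.sqrt n / 2 ≤ (m : ℝ))
    (a : Fin n → Ωs → ℝ) (hmeas : ∀ j, Measurable (a j))
    (hindep : iIndepFun a P)
    (hL2 : ∀ j, MemLp (a j) 2 P)
    (hmean : ∀ j, (∫ ω, a j ω ∂P) = ahat j)
    (hvar : ∀ j, variance (a j) P = σ j ^ 2)
    (x : Fin n → ℝ) (hx : ∀ j, x j = 0 ∨ x j = 1) (β : ℝ)
    (hβ : IsGreatest
      {v : ℝ | ∃ z : Fin n → Fin m → ℝ,
        (∀ j k, 0 ≤ z j k ∧ z j k ≤ 1) ∧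
        (∑ j, ∑ k : Fin m, (2 * ((k : ℕ) : ℝ) + 1) * z j k) ≤ (m : ℝ) ^ 2 ∧
        v = ∑ j, ∑ k : Fin m, Real.sqrt (ρ / (1 - ρ)) * σ j / m * x j * z j k} β)
    (hfeas : (∑ j, ahat j * x j) + β ≤ b) :
    ρ - (P {ω | (∑ j, a j ω * x j) ≤ b}).toReal ≤
      ρ * (1 - ρ) / (4 * (m : ℝ) ^ 2 / n - ρ) :=
  stmt_12_general P n hn ρ hρ hρ' σ hσ ahat b m hmn a hindep hL2 hmean hvar x hx β hβ hfeas
end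

section
/- Let n be a positive integer, Ω > 0, σ_1,…,σ_n ≥ 0, and â_1,…,â_n and b reals. For each positive integer m let β_m(x,Δ) denote the value β(x,Δ) computed with d_j^k = Ω·σ_j/m, f_j^k = 2k−1 (k = 1,…,m). Then there exists a positive integer m₀ such that for every integer m ≥ m₀ and every x ∈ {0,1}^n: if Σ_j â_j x_j + β_m(x, m²) ≤ b, then Σ_j â_j x_j + Ω·√(Σ_j σ_j² x_j²) ≤ b. That is, for all sufficiently large m, every feasible (hence every optimal) solution to (RKPm) with Δ = m² is feasible (hence optimal) for the second-order cone-constrained binary knapsack problem (SOCKP). -/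
private lemma sum_odds_aux (q : ℕ) :
    ∑ k ∈ Finset.range q, (2 * (k : ℝ) + 1) = (q : ℝ) ^ 2 := by
  induction q with
  | zero => simp
  | succ q ih =>
      rw [Finset.sum_range_succ, ih]
      push_cast
      ring

private lemma sum_odds (m q : ℕ) (hq : q ≤ m) :
    ∑ k : Fin m, (2 * ((k : ℕ) : ℝ) + 1) * (if (k : ℕ) < q then (1:ℝ) else 0)
      = (q : ℝ) ^ 2 := by
  rw [Fin.sum_univ_eq_sum_range
    (fun k => (2 * (k : ℝ) + 1) * (if k < q then (1:ℝ) else 0))]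
  rw [← sum_odds_aux q]
  rw [← Finset.sum_subset (Finset.range_subset_range.mpr hq)
    (by intro k hk hk'
        simp only [Finset.mem_range] at hk'
        simp [hk'])]
  apply Finset.sum_congr rfl
  intro k hk
  simp only [Finset.mem_range] at hk
  simp [hk]

private lemma sum_ones (m q : ℕ) (hq : q ≤ m) :
    ∑ k : Fin m, (if (k : ℕ) < q then (1:ℝ) else 0) = (q : ℝ) := by
  rw [Fin.sum_univ_eq_sum_range (fun k => (if k < q then (1:ℝ) else 0))]
  rw [← Finset.sum_subset (Finset.range_subset_range.mpr hq)
    (by intro k hk hk'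
        simp only [Finset.mem_range] at hk'
        simp [hk'])]
  have : ∑ k ∈ Finset.range q, (if k < q then (1:ℝ) else 0)
      = ∑ k ∈ Finset.range q, (1:ℝ) := by
    apply Finset.sum_congr rfl
    intro k hk
    simp only [Finset.mem_range] at hk
    simp [hk]
  rw [this]
  simp

private lemma beta_lower (n m : ℕ) (hm : 0 < m) (Ω : ℝ) (hΩ : 0 < Ω)
    (σ : Fin n → ℝ) (hσ : ∀ j, 0 ≤ σ j)
    (x : Fin n → ℝ) (hx : ∀ j, x j = 0 ∨ x j = 1) (B : ℝ)
    (hB : IsGreatest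
      {v : ℝ | ∃ z : Fin n → Fin m → ℝ,
        (∀ j k, 0 ≤ z j k ∧ z j k ≤ 1) ∧
        (∑ j, ∑ k : Fin m, (2 * ((k : ℕ) : ℝ) + 1) * z j k) ≤ (m : ℝ) ^ 2 ∧
        v = ∑ j, ∑ k : Fin m, Ω * σ j / m * x j * z j k} B) :
    Ω * Real.sqrt (∑ j, σ j ^ 2 * x j ^ 2) - Ω * (∑ j, σ j) / m ≤ B := by
  have hx0 : ∀ j, 0 ≤ x j := by
    intro j; rcases hx j with h | h <;> rw [h] <;> norm_num
  have hx1 : ∀ j, x j ≤ 1 := by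
    intro j; rcases hx j with h | h <;> rw [h] <;> norm_num
  have hm' : (0:ℝ) < m := by exact_mod_cast hm
  set Q : ℝ := ∑ j, σ j ^ 2 * x j ^ 2 with hQdef
  have hQ0 : 0 ≤ Q := Finset.sum_nonneg (fun j _ => by positivity)
  set S : ℝ := Real.sqrt Q with hSdef
  have hσs : 0 ≤ ∑ j, σ j := Finset.sum_nonneg (fun j _ => hσ j)
  by_cases hQ : Q = 0
  · -- value 0 is attainable, and target ≤ 0
    have h0 : (0:ℝ) ∈ {v : ℝ | ∃ z : Fin n → Fin m → ℝ,
        (∀ j k, 0 ≤ z j k ∧ z j k ≤ 1) ∧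
        (∑ j, ∑ k : Fin m, (2 * ((k : ℕ) : ℝ) + 1) * z j k) ≤ (m : ℝ) ^ 2 ∧
        0 = ∑ j, ∑ k : Fin m, Ω * σ j / m * x j * z j k} := by
      refine ⟨fun _ _ => 0, fun j k => by norm_num, ?_, by simp⟩
      simp only [mul_zero, Finset.sum_const_zero]
      positivity
    have hB0 : (0:ℝ) ≤ B := hB.2 h0
    have : Ω * S = 0 := by rw [hSdef, hQ, Real.sqrt_zero, mul_zero]
    rw [this]
    have : 0 ≤ Ω * (∑ j, σ j) / m := by positivity
    linarith
  · have hQpos : 0 < Q := lt_of_le_of_ne hQ0 (Ne.symm hQ)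
    have hS : 0 < S := Real.sqrt_pos.mpr hQpos
    have hS2 : S ^ 2 = Q := Real.sq_sqrt hQ0
    set t : Fin n → ℝ := fun j => m * (σ j * x j) / S with htdef
    have ht0 : ∀ j, 0 ≤ t j := by
      intro j
      have := hσ j; have := hx0 j
      positivity
    have hsx : ∀ j, σ j * x j ≤ S := by
      intro j
      have h1 : (σ j * x j) ^ 2 ≤ Q := by
        have : σ j ^ 2 * x j ^ 2 ≤ Q :=
          Finset.single_le_sum (f := fun j => σ j ^ 2 * x j ^ 2)
            (fun i _ => by positivity) (Finset.mem_univ j)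
        calc (σ j * x j) ^ 2 = σ j ^ 2 * x j ^ 2 := by ring
        _ ≤ Q := this
      calc σ j * x j = Real.sqrt ((σ j * x j) ^ 2) := by
            rw [Real.sqrt_sq (by have := hσ j; have := hx0 j; positivity)]
        _ ≤ Real.sqrt Q := Real.sqrt_le_sqrt h1
    have htle : ∀ j, t j ≤ m := by
      intro j
      rw [htdef]
      rw [div_le_iff₀ hS]
      calc (m : ℝ) * (σ j * x j) ≤ m * S := by
            apply mul_le_mul_of_nonneg_left (hsx j) (le_of_lt hm')
        _ = m * S := rfl
    set q : Fin n → ℕ := fun j => ⌊t j⌋₊ with hqdef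
    have hql : ∀ j, (q j : ℝ) ≤ t j := fun j => Nat.floor_le (ht0 j)
    have hqg : ∀ j, t j - 1 ≤ (q j : ℝ) := by
      intro j
      have := Nat.lt_floor_add_one (t j)
      linarith
    have hqm : ∀ j, q j ≤ m := by
      intro j
      have : (q j : ℝ) ≤ (m : ℝ) := (hql j).trans (htle j)
      exact_mod_cast this
    set z : Fin n → Fin m → ℝ := fun j k => if (k : ℕ) < q j then 1 else 0 with hzdef
    set v : ℝ := ∑ j, Ω * σ j / m * x j * (q j : ℝ) with hvdef
    have hmem : v ∈ {v : ℝ | ∃ z : Fin n → Fin m → ℝ,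
        (∀ j k, 0 ≤ z j k ∧ z j k ≤ 1) ∧
        (∑ j, ∑ k : Fin m, (2 * ((k : ℕ) : ℝ) + 1) * z j k) ≤ (m : ℝ) ^ 2 ∧
        v = ∑ j, ∑ k : Fin m, Ω * σ j / m * x j * z j k} := by
      refine ⟨z, fun j k => by by_cases h : (k : ℕ) < q j <;> simp [hzdef, h], ?_, ?_⟩
      · have hcost : ∀ j, ∑ k : Fin m, (2 * ((k : ℕ) : ℝ) + 1) * z j k
            = (q j : ℝ) ^ 2 := fun j => sum_odds m (q j) (hqm j)
        calc ∑ j, ∑ k : Fin m, (2 * ((k : ℕ) : ℝ) + 1) * z j k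
            = ∑ j, (q j : ℝ) ^ 2 := Finset.sum_congr rfl (fun j _ => hcost j)
          _ ≤ ∑ j, t j ^ 2 := Finset.sum_le_sum (fun j _ => by
              have h1 := hql j
              have h2 : (0:ℝ) ≤ (q j : ℝ) := Nat.cast_nonneg _
              nlinarith)
          _ = (m : ℝ) ^ 2 := by
              have : ∀ j, t j ^ 2 = (m : ℝ) ^ 2 / S ^ 2 * (σ j ^ 2 * x j ^ 2) := by
                intro j
                rw [htdef]
                field_simp
              rw [Finset.sum_congr rfl (fun j _ => this j), ← Finset.mul_sum,
                ← hQdef, ← hS2]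
              field_simp
      · rw [hvdef]
        apply Finset.sum_congr rfl
        intro j _
        have : ∑ k : Fin m, Ω * σ j / m * x j * z j k
            = Ω * σ j / m * x j * ∑ k : Fin m, z j k := by
          rw [Finset.mul_sum]
        rw [this, hzdef]
        rw [sum_ones m (q j) (hqm j)]
    have hvB : v ≤ B := hB.2 hmem
    -- now: Ω * S - Ω * (∑ σ) / m ≤ v
    have hterm : ∀ j, Ω * σ j / m * x j * t j = Ω / S * (σ j ^ 2 * x j ^ 2) := by
      intro j
      rw [htdef]
      field_simp
    have h1 : ∑ j, Ω * σ j / m * x j * t j = Ω * S := by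
      rw [Finset.sum_congr rfl (fun j _ => hterm j), ← Finset.mul_sum, ← hQdef, ← hS2]
      field_simp
    have h2 : ∑ j, Ω * σ j / m * x j ≤ Ω * (∑ j, σ j) / m := by
      have : ∀ j, Ω * σ j / m * x j ≤ Ω * σ j / m := by
        intro j
        have hc : 0 ≤ Ω * σ j / m := by have := hσ j; positivity
        calc Ω * σ j / m * x j ≤ Ω * σ j / m * 1 :=
              mul_le_mul_of_nonneg_left (hx1 j) hc
          _ = Ω * σ j / m := mul_one _
      calc ∑ j, Ω * σ j / m * x j ≤ ∑ j, Ω * σ j / m :=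
            Finset.sum_le_sum (fun j _ => this j)
        _ = Ω * (∑ j, σ j) / m := by
            rw [Finset.mul_sum, Finset.sum_div]
    have h3 : ∑ j, Ω * σ j / m * x j * (t j - 1) ≤ v := by
      rw [hvdef]
      apply Finset.sum_le_sum
      intro j _
      have hc : 0 ≤ Ω * σ j / m * x j := by
        have := hσ j; have := hx0 j; positivity
      exact mul_le_mul_of_nonneg_left (hqg j) hc
    have h4 : ∑ j, Ω * σ j / m * x j * (t j - 1)
        = (∑ j, Ω * σ j / m * x j * t j) - ∑ j, Ω * σ j / m * x j := by
      rw [← Finset.sum_sub_distrib]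
      apply Finset.sum_congr rfl
      intro j _
      ring
    have : Ω * S - Ω * (∑ j, σ j) / m ≤ v := by
      rw [h4, h1] at h3
      linarith
    linarith

/-- **Proposition 5.** For fixed data `Ω > 0`, `σ_j ≥ 0`, `â_j`, `b`, there
exists `m₀` such that for every `m ≥ m₀`, every `x ∈ {0,1}^n` feasible to (RKPm) with
`Δ = m²` (i.e. `Σ_j â_j x_j + β_m(x,m²) ≤ b`) is feasible to the second-order
cone-constrained problem (SOCKP): `Σ_j â_j x_j + Ω·√(Σ_j σ_j² x_j²) ≤ b`.  Hence, for all
sufficiently large `m`, an optimal solution to (RKPm) with `Δ = m²` is optimal to (SOCKP). -/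
theorem stmt_15 (n : ℕ) (hn : 0 < n) (Ω : ℝ) (hΩ : 0 < Ω)
    (σ : Fin n → ℝ) (hσ : ∀ j, 0 ≤ σ j) (ahat : Fin n → ℝ) (b : ℝ)
    (β : (m : ℕ) → (Fin n → ℝ) → ℝ)
    (hβ : ∀ m : ℕ, 0 < m → ∀ x : Fin n → ℝ, IsGreatest
      {v : ℝ | ∃ z : Fin n → Fin m → ℝ,
        (∀ j k, 0 ≤ z j k ∧ z j k ≤ 1) ∧
        (∑ j, ∑ k : Fin m, (2 * ((k : ℕ) : ℝ) + 1) * z j k) ≤ (m : ℝ) ^ 2 ∧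
        v = ∑ j, ∑ k : Fin m, Ω * σ j / m * x j * z j k} (β m x)) :
    ∃ m₀ : ℕ, 0 < m₀ ∧ ∀ m : ℕ, m₀ ≤ m →
      ∀ x : Fin n → ℝ, (∀ j, x j = 0 ∨ x j = 1) →
        (∑ j, ahat j * x j) + β m x ≤ b →
        (∑ j, ahat j * x j) + Ω * Real.sqrt (∑ j, σ j ^ 2 * x j ^ 2) ≤ b := by
  classical
  set C : ℝ := Ω * ∑ j, σ j with hCdef
  have hC0 : 0 ≤ C := by
    have : 0 ≤ ∑ j, σ j := Finset.sum_nonneg (fun j _ => hσ j)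
    positivity
  set F : (Fin n → Bool) → ℝ := fun y =>
    (∑ j, ahat j * (if y j then (1:ℝ) else 0))
      + Ω * Real.sqrt (∑ j, σ j ^ 2 * (if y j then (1:ℝ) else 0) ^ 2) - b with hFdef
  set P : Finset ℝ := (Finset.univ.image F).filter (fun g => 0 < g) with hPdef
  set ε : ℝ := if h : P.Nonempty then P.min' h else 1 with hεdef
  have hε : 0 < ε := by
    rw [hεdef]
    split
    · rename_i h
      exact (Finset.mem_filter.mp (P.min'_mem h)).2
    · norm_num
  have hεle : ∀ g ∈ P, ε ≤ g := by
    intro g hg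
    rw [hεdef]
    rw [dif_pos ⟨g, hg⟩]
    exact P.min'_le g hg
  refine ⟨⌊C / ε⌋₊ + 1, Nat.succ_pos _, ?_⟩
  intro m hm x hx hfeas
  have hm0 : 0 < m := lt_of_lt_of_le (Nat.succ_pos _) hm
  have hm' : (0:ℝ) < m := by exact_mod_cast hm0
  have hCm : C / m < ε := by
    have h1 : C / ε < (⌊C / ε⌋₊ + 1 : ℕ) := by
      push_cast
      exact Nat.lt_floor_add_one _
    have h2 : ((⌊C / ε⌋₊ + 1 : ℕ) : ℝ) ≤ m := by exact_mod_cast hm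
    have h3 : C / ε < (m : ℝ) := lt_of_lt_of_le h1 h2
    rw [div_lt_iff₀ hε] at h3
    rw [div_lt_iff₀ hm']
    linarith [mul_comm ε (m : ℝ)]
  set S : ℝ := Real.sqrt (∑ j, σ j ^ 2 * x j ^ 2) with hSdef
  have hlow : Ω * S - C / m ≤ β m x := by
    have := beta_lower n m hm0 Ω hΩ σ hσ x hx (β m x) (hβ m hm0 x)
    rw [hCdef]
    exact this
  by_contra hcon
  push_neg at hcon
  -- the gap is positive and belongs to P, hence ≥ ε
  set y : Fin n → Bool := fun j => decide (x j = 1) with hydef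
  have hxy : ∀ j, x j = if y j then 1 else 0 := by
    intro j
    rcases hx j with h | h
    · have hne : ¬ (x j = 1) := by rw [h]; norm_num
      simp [hydef, hne, h]
    · simp [hydef, h]
  have e1 : (∑ j, ahat j * (if y j then (1:ℝ) else 0)) = ∑ j, ahat j * x j :=
    Finset.sum_congr rfl (fun j _ => by rw [hxy j])
  have e2 : (∑ j, σ j ^ 2 * (if y j then (1:ℝ) else 0) ^ 2)
      = ∑ j, σ j ^ 2 * x j ^ 2 :=
    Finset.sum_congr rfl (fun j _ => by rw [hxy j])
  have hFy : F y = (∑ j, ahat j * x j) + Ω * S - b := by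
    rw [hFdef]
    simp only
    rw [e1, e2, hSdef]
  have hGpos : 0 < (∑ j, ahat j * x j) + Ω * S - b := by linarith
  have hFP : F y ∈ P := by
    rw [hPdef, Finset.mem_filter]
    constructor
    · exact Finset.mem_image_of_mem F (Finset.mem_univ y)
    · rw [hFy]; exact hGpos
  have hεG : ε ≤ (∑ j, ahat j * x j) + Ω * S - b := by
    have := hεle _ hFP
    rw [hFy] at this
    exact this
  -- but feasibility forces the gap to be < ε
  have : (∑ j, ahat j * x j) + Ω * S - C / m ≤ b := by linarith
  linarith
end

section
/- Let n be a positive integer, let â_1,…,â_n, b be integers, let σ_1,…,σ_n be nonnegative integers, and let Ω be a positive integer. Let x ∈ {0,1}^n with S := Σ_j σ_j² x_j² > 0, and let m be a real number with m > (Ω/2)·√(n·Σ_{j=1}^n σ_j²). If Σ_j â_j x_j + Ω·√S > b, then Σ_j â_j x_j + Ω·√(1 − n/(4m²))·√S > b. -/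
set_option maxHeartbeats 1000000 in
/-- **integrality step of Proposition 6.** For integer data
(`â_j, b` integers, `σ_j` nonnegative integers, `Ω` a positive integer), if a binary
vector `x` with `S := Σ_j σ_j² x_j² > 0` violates the second-order cone constraint
`Σ_j â_j x_j + Ω√S ≤ b`, and `m > (Ω/2)·√(n·Σ_j σ_j²)`, then `x` still violates the
constraint with `Ω` shrunk to `Ω·√(1 − n/(4m²))`. -/
theorem stmt_16 (n : ℕ) (hn : 0 < n) (ahat : Fin n → ℤ) (b : ℤ)
    (σ : Fin n → ℕ) (Ω : ℕ) (hΩ : 0 < Ω)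
    (x : Fin n → ℝ) (hx : ∀ j, x j = 0 ∨ x j = 1)
    (hS : 0 < ∑ j, ((σ j : ℝ)) ^ 2 * x j ^ 2)
    (m : ℝ) (hm : (Ω : ℝ) / 2 * Real.sqrt ((n : ℝ) * ∑ j, ((σ j : ℝ)) ^ 2) < m)
    (hviol : (b : ℝ) <
      (∑ j, (ahat j : ℝ) * x j) + Ω * Real.sqrt (∑ j, ((σ j : ℝ)) ^ 2 * x j ^ 2)) :
    (b : ℝ) <
      (∑ j, (ahat j : ℝ) * x j) +
        Ω * Real.sqrt (1 - n / (4 * m ^ 2)) *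
          Real.sqrt (∑ j, ((σ j : ℝ)) ^ 2 * x j ^ 2) := by
  classical
  set y : Fin n → ℤ := fun j => if x j = 0 then 0 else 1 with hy_def
  have hy : ∀ j, ((y j : ℝ)) = x j := by
    intro j
    rcases hx j with h | h <;> simp [hy_def, h]
  set A : ℤ := ∑ j, ahat j * y j with hA_def
  set SZ : ℤ := ∑ j, (σ j : ℤ) ^ 2 * y j with hSZ_def
  have hA : (A : ℝ) = ∑ j, (ahat j : ℝ) * x j := by
    push_cast [hA_def]
    exact Finset.sum_congr rfl fun j _ => by rw [hy]
  have hSZ : (SZ : ℝ) = ∑ j, ((σ j : ℝ)) ^ 2 * x j ^ 2 := by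
    push_cast [hSZ_def]
    refine Finset.sum_congr rfl fun j _ => ?_
    rcases hx j with h | h <;> simp [hy_def, h]
  set T : ℝ := ∑ j, ((σ j : ℝ)) ^ 2 * x j ^ 2 with hT_def
  have hT0 : (0:ℝ) < T := hS
  have hSZ1 : (1:ℤ) ≤ SZ := by
    have : (0:ℝ) < (SZ:ℝ) := by rw [hSZ]; exact hS
    exact_mod_cast this
  have hT1 : (1:ℝ) ≤ T := by
    have : ((1:ℤ):ℝ) ≤ (SZ:ℝ) := by exact_mod_cast hSZ1
    rw [hSZ] at this; exact_mod_cast this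
  set Ssig : ℝ := ∑ j, ((σ j : ℝ)) ^ 2 with hSsig_def
  have hTle : T ≤ Ssig := by
    refine Finset.sum_le_sum fun j _ => ?_
    rcases hx j with h | h <;> simp [h] <;> positivity
  have hSsig0 : (0:ℝ) ≤ Ssig := le_trans hT0.le hTle
  have hΩ1 : (1:ℝ) ≤ (Ω:ℝ) := by exact_mod_cast hΩ
  have hn1 : (1:ℝ) ≤ (n:ℝ) := by exact_mod_cast hn
  have hm0 : (0:ℝ) < m := lt_of_le_of_lt (by positivity) hm
  have hmsq : (Ω:ℝ)^2 / 4 * ((n:ℝ) * Ssig) < m ^ 2 := by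
    have hs : Real.sqrt ((n:ℝ) * Ssig) * Real.sqrt ((n:ℝ) * Ssig) = (n:ℝ) * Ssig :=
      Real.mul_self_sqrt (by positivity)
    have ha : (0:ℝ) ≤ (Ω:ℝ) / 2 * Real.sqrt ((n:ℝ) * Ssig) := by positivity
    have h2 := mul_lt_mul'' hm hm ha ha
    have heq : (Ω:ℝ)^2 / 4 * ((n:ℝ) * Ssig)
        = ((Ω:ℝ) / 2 * Real.sqrt ((n:ℝ) * Ssig)) * ((Ω:ℝ) / 2 * Real.sqrt ((n:ℝ) * Ssig)) := by
      rw [mul_mul_mul_comm, hs]; ring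
    rw [heq, pow_two]; exact h2
  have h4m : (Ω:ℝ)^2 * (n:ℝ) * T < 4 * m ^ 2 := by
    have h1 : (Ω:ℝ)^2 * (n:ℝ) * T ≤ (Ω:ℝ)^2 * (n:ℝ) * Ssig := by
      have : (0:ℝ) ≤ (Ω:ℝ)^2 * (n:ℝ) := by positivity
      exact mul_le_mul_of_nonneg_left hTle this
    linarith
  have hΩ2 : (1:ℝ) ≤ (Ω:ℝ)^2 := by nlinarith [hΩ1]
  have hε1 : 0 < 1 - (n:ℝ) / (4 * m ^ 2) := by
    rw [sub_pos, div_lt_one (by positivity)]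
    have h2 : (1:ℝ) ≤ (Ω:ℝ)^2 * T := by nlinarith [hΩ2, hT1]
    have h3 : (n:ℝ) * 1 ≤ (n:ℝ) * ((Ω:ℝ)^2 * T) :=
      mul_le_mul_of_nonneg_left h2 (by positivity)
    nlinarith [h3, h4m]
  have hrhs0 : (0:ℝ) < (Ω:ℝ) * Real.sqrt (1 - (n:ℝ) / (4 * m ^ 2)) * Real.sqrt T := by
    have hΩ0 : (0:ℝ) < (Ω:ℝ) := by exact_mod_cast hΩ
    positivity
  rw [← hA]
  by_cases hc : b ≤ A
  · have : (b:ℝ) ≤ (A:ℝ) := by exact_mod_cast hc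
    linarith
  push_neg at hc
  have hc1 : (1:ℤ) ≤ b - A := by omega
  have hcpos : (0:ℝ) < (b:ℝ) - A := by
    have : ((1:ℤ):ℝ) ≤ ((b - A : ℤ):ℝ) := by exact_mod_cast hc1
    push_cast at this; linarith
  have hviol' : (b:ℝ) - A < (Ω:ℝ) * Real.sqrt T := by
    rw [hA]; linarith
  have hsqT : Real.sqrt T ^ 2 = T := Real.sq_sqrt hT0.le
  have hsq : ((b:ℝ) - A) ^ 2 < (Ω:ℝ)^2 * T := by
    have h2 := mul_lt_mul'' hviol' hviol' hcpos.le hcpos.le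
    have hss : Real.sqrt T * Real.sqrt T = T := Real.mul_self_sqrt hT0.le
    have heq : (Ω:ℝ) * Real.sqrt T * ((Ω:ℝ) * Real.sqrt T) = (Ω:ℝ)^2 * T := by
      rw [mul_mul_mul_comm, hss]; ring
    rw [pow_two]; rw [heq] at h2; exact h2
  have hsqZ : (b - A) ^ 2 + 1 ≤ Ω ^ 2 * SZ := by
    have h2 : ((b - A : ℤ) : ℝ) ^ 2 < ((Ω ^ 2 * SZ : ℤ) : ℝ) := by
      push_cast; rw [hSZ]; exact hsq
    have h3 : ((b - A) ^ 2 : ℤ) < Ω ^ 2 * SZ := by exact_mod_cast h2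
    omega
  have hsqZR : ((b:ℝ) - A) ^ 2 + 1 ≤ (Ω:ℝ)^2 * T := by
    have h2 : (((b - A) ^ 2 + 1 : ℤ) : ℝ) ≤ ((Ω ^ 2 * SZ : ℤ) : ℝ) := by exact_mod_cast hsqZ
    push_cast at h2; rw [hSZ] at h2; linarith
  have heps : (Ω:ℝ)^2 * ((n:ℝ) / (4 * m ^ 2)) * T < 1 := by
    have hrw : (Ω:ℝ)^2 * ((n:ℝ) / (4 * m ^ 2)) * T = (Ω:ℝ)^2 * (n:ℝ) * T / (4 * m ^ 2) := by
      ring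
    rw [hrw, div_lt_one (by positivity)]
    exact h4m
  have hkey : ((b:ℝ) - A) ^ 2
      < ((Ω:ℝ) * Real.sqrt (1 - (n:ℝ) / (4 * m ^ 2)) * Real.sqrt T) ^ 2 := by
    have hsqε : Real.sqrt (1 - (n:ℝ) / (4 * m ^ 2)) ^ 2 = 1 - (n:ℝ) / (4 * m ^ 2) :=
      Real.sq_sqrt hε1.le
    have hexp : ((Ω:ℝ) * Real.sqrt (1 - (n:ℝ) / (4 * m ^ 2)) * Real.sqrt T) ^ 2
        = (Ω:ℝ)^2 * T - (Ω:ℝ)^2 * ((n:ℝ) / (4 * m ^ 2)) * T := by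
      rw [mul_pow, mul_pow, hsqε, hsqT]; ring
    rw [hexp]
    linarith
  have hfin : (b:ℝ) - A < (Ω:ℝ) * Real.sqrt (1 - (n:ℝ) / (4 * m ^ 2)) * Real.sqrt T :=
    lt_of_pow_lt_pow_left₀ 2 hrhs0.le hkey
  linarith
end

section
/- Let n be a positive integer, let â_1,…,â_n, b be nonnegative integers, let σ_1,…,σ_n be nonnegative integers, and let Ω be a positive integer. Let m be an integer with m ≥ m* := ⌈(Ω/2)·√(n·Σ_{j=1}^n σ_j²)⌉ + 1, and set d_j^k = Ω·σ_j/m, f_j^k = 2k−1. Then every x ∈ {0,1}^n satisfying Σ_j â_j x_j + β(x, m²) ≤ b also satisfies Σ_j â_j x_j + Ω·√(Σ_j σ_j² x_j²) ≤ b. Consequently, an optimal solution to (RKPm) with Δ = m² is also an optimal solution to the second-order cone-constrained binary knapsack problem (SOCKP) whenever m ≥ m*. -/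
lemma sum_odds_s17 (m : ℕ) : ∑ k ∈ Finset.range m, (2*(k:ℝ)+1) = (m:ℝ)^2 := by
  induction m with
  | zero => simp
  | succ m ih => rw [Finset.sum_range_succ, ih]; push_cast; ring

lemma clamp_sum (m : ℕ) (t : ℝ) (h0 : 0 ≤ t) (hm : t ≤ m) :
    ∑ k ∈ Finset.range m, max 0 (min 1 (t - (k:ℝ))) = t := by
  induction m with
  | zero =>
    simp only [Finset.range_zero, Finset.sum_empty]
    have : t ≤ 0 := by exact_mod_cast hm
    linarith
  | succ m ih =>
    rw [Finset.sum_range_succ]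
    have hm' : t ≤ (m:ℝ) + 1 := by push_cast at hm; linarith
    by_cases h : t ≤ m
    · rw [ih h, max_eq_left (le_trans (min_le_right _ _) (by linarith))]
      ring
    · push_neg at h
      have h1 : ∀ k ∈ Finset.range m, max 0 (min 1 (t - (k:ℝ))) = 1 := by
        intro k hk
        have hk' : (k:ℝ) + 1 ≤ (m:ℝ) := by exact_mod_cast Finset.mem_range.1 hk
        rw [min_eq_left (by linarith), max_eq_right zero_le_one]
      rw [Finset.sum_congr rfl h1, min_eq_right (by linarith),
        max_eq_right (by linarith), Finset.sum_const, Finset.card_range]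
      push_cast; ring

lemma clamp_cost (m : ℕ) (t : ℝ) (h0 : 0 ≤ t) (hm : t ≤ m) :
    ∑ k ∈ Finset.range m, (2*(k:ℝ)+1) * max 0 (min 1 (t - (k:ℝ))) ≤ t^2 + 1/4 := by
  induction m with
  | zero =>
    simp only [Finset.range_zero, Finset.sum_empty]
    nlinarith
  | succ m ih =>
    rw [Finset.sum_range_succ]
    have hm' : t ≤ (m:ℝ) + 1 := by push_cast at hm; linarith
    by_cases h : t ≤ m
    · rw [max_eq_left (le_trans (min_le_right _ _) (by linarith))]
      have := ih h
      linarith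
    · push_neg at h
      have h1 : ∀ k ∈ Finset.range m, (2*(k:ℝ)+1) * max 0 (min 1 (t - (k:ℝ)))
          = 2*(k:ℝ)+1 := by
        intro k hk
        have hk' : (k:ℝ) + 1 ≤ (m:ℝ) := by exact_mod_cast Finset.mem_range.1 hk
        rw [min_eq_left (by linarith), max_eq_right zero_le_one, mul_one]
      rw [Finset.sum_congr rfl h1, sum_odds_s17, min_eq_right (by linarith),
        max_eq_right (by linarith)]
      nlinarith [sq_nonneg (t - (m:ℝ) - 1/2)]

lemma quad_bound (m : ℕ) (z : ℕ → ℝ) (hz : ∀ k, 0 ≤ z k ∧ z k ≤ 1) :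
    (∑ k ∈ Finset.range m, z k)^2 ≤ ∑ k ∈ Finset.range m, (2*(k:ℝ)+1) * z k := by
  induction m with
  | zero => simp
  | succ m ih =>
    rw [Finset.sum_range_succ, Finset.sum_range_succ]
    have ht : ∑ k ∈ Finset.range m, z k ≤ m := by
      calc ∑ k ∈ Finset.range m, z k ≤ ∑ _k ∈ Finset.range m, (1:ℝ) :=
            Finset.sum_le_sum (fun k _ => (hz k).2)
        _ = m := by simp
    have h' : 0 ≤ 2*(m:ℝ) + 1 - 2*(∑ k ∈ Finset.range m, z k) - z m := by
      linarith [(hz m).2]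
    nlinarith [ih, mul_nonneg (hz m).1 h']

set_option maxHeartbeats 1000000 in
/-- **Proposition 6.** For integer data (`â_j, b` nonnegative integers,
`σ_j` nonnegative integers, `Ω` a positive integer) and any integer
`m ≥ m* = ⌈(Ω/2)·√(n·Σ_j σ_j²)⌉ + 1`, every `x ∈ {0,1}^n` with
`Σ_j â_j x_j + β(x,m²) ≤ b` also satisfies `Σ_j â_j x_j + Ω·√(Σ_j σ_j² x_j²) ≤ b`.
Consequently, for any profit vector `p`, an optimal solution to (RKPm) with `Δ = m²` is
also an optimal solution to the second-order cone-constrained problem (SOCKP). -/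
theorem stmt_17 (n : ℕ) (hn : 0 < n) (ahat : Fin n → ℕ) (b : ℕ)
    (σ : Fin n → ℕ) (Ω : ℕ) (hΩ : 0 < Ω)
    (m : ℕ)
    (hm : ⌈(Ω : ℝ) / 2 * Real.sqrt ((n : ℝ) * ∑ j, ((σ j : ℝ)) ^ 2)⌉₊ + 1 ≤ m)
    (β : (Fin n → ℝ) → ℝ)
    (hβ : ∀ x : Fin n → ℝ, IsGreatest
      {v : ℝ | ∃ z : Fin n → Fin m → ℝ,
        (∀ j k, 0 ≤ z j k ∧ z j k ≤ 1) ∧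
        (∑ j, ∑ k : Fin m, (2 * ((k : ℕ) : ℝ) + 1) * z j k) ≤ (m : ℝ) ^ 2 ∧
        v = ∑ j, ∑ k : Fin m, (Ω : ℝ) * (σ j : ℝ) / m * x j * z j k} (β x)) :
    (∀ x : Fin n → ℝ, (∀ j, x j = 0 ∨ x j = 1) →
      (∑ j, (ahat j : ℝ) * x j) + β x ≤ (b : ℝ) →
      (∑ j, (ahat j : ℝ) * x j) +
        Ω * Real.sqrt (∑ j, ((σ j : ℝ)) ^ 2 * x j ^ 2) ≤ (b : ℝ)) ∧
    (∀ p : Fin n → ℝ, ∀ xs : Fin n → ℝ, (∀ j, xs j = 0 ∨ xs j = 1) →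
      (∑ j, (ahat j : ℝ) * xs j) + β xs ≤ (b : ℝ) →
      (∀ y : Fin n → ℝ, (∀ j, y j = 0 ∨ y j = 1) →
        (∑ j, (ahat j : ℝ) * y j) + β y ≤ (b : ℝ) →
        (∑ j, p j * y j) ≤ ∑ j, p j * xs j) →
      ((∑ j, (ahat j : ℝ) * xs j) +
          Ω * Real.sqrt (∑ j, ((σ j : ℝ)) ^ 2 * xs j ^ 2) ≤ (b : ℝ) ∧
        ∀ y : Fin n → ℝ, (∀ j, y j = 0 ∨ y j = 1) →
          (∑ j, (ahat j : ℝ) * y j) +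
            Ω * Real.sqrt (∑ j, ((σ j : ℝ)) ^ 2 * y j ^ 2) ≤ (b : ℝ) →
          (∑ j, p j * y j) ≤ ∑ j, p j * xs j)) := by
  classical
  have hm1 : 1 ≤ m := le_trans (Nat.le_add_left 1 _) hm
  have hmR : (0:ℝ) < m := by exact_mod_cast hm1
  -- β is nonnegative (z = 0 is feasible)
  have hβ0 : ∀ x : Fin n → ℝ, 0 ≤ β x := by
    intro x
    refine (hβ x).2 ⟨fun _ _ => 0, fun j k => ⟨le_rfl, zero_le_one⟩, ?_, by simp⟩
    simpa using sq_nonneg (m:ℝ)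
  -- Key claim (part 1)
  have key : ∀ x : Fin n → ℝ, (∀ j, x j = 0 ∨ x j = 1) →
      (∑ j, (ahat j : ℝ) * x j) + β x ≤ (b : ℝ) →
      (∑ j, (ahat j : ℝ) * x j) +
        Ω * Real.sqrt (∑ j, ((σ j : ℝ)) ^ 2 * x j ^ 2) ≤ (b : ℝ) := by
    intro x hx hfeas
    set Sr := ∑ j, ((σ j : ℝ))^2 * x j^2 with hSr
    have hS0 : 0 ≤ Sr := Finset.sum_nonneg fun j _ => by positivity
    clear_value Sr
    -- integers A and T
    set A : ℕ := ∑ j, if x j = 1 then ahat j else 0 with hAdef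
    have hAx : ∑ j, (ahat j : ℝ) * x j = (A:ℝ) := by
      rw [hAdef]; push_cast
      refine Finset.sum_congr rfl fun j _ => ?_
      rcases hx j with h | h <;> simp [h]
    clear_value A
    set T : ℕ := ∑ j, if x j = 1 then (σ j)^2 else 0 with hTdef
    have hTx : Sr = (T:ℝ) := by
      rw [hSr, hTdef]; push_cast
      refine Finset.sum_congr rfl fun j _ => ?_
      rcases hx j with h | h <;> simp [h]
    clear_value T
    rcases eq_or_lt_of_le hS0 with hSz | hSpos
    · rw [← hSz, Real.sqrt_zero, mul_zero, add_zero]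
      linarith [hβ0 x, hfeas]
    -- positive case
    have hAb : (A:ℝ) + β x ≤ b := by rw [← hAx]; exact hfeas
    have hAleb : A ≤ b := by
      have : (A:ℝ) ≤ b := by linarith [hβ0 x]
      exact_mod_cast this
    set N : ℕ := b - A with hNdef
    have hN : (N:ℝ) = (b:ℝ) - A := by
      rw [hNdef]; exact Nat.cast_sub hAleb
    clear_value N
    have hβN : β x ≤ (N:ℝ) := by rw [hN]; linarith
    have hTpos : 0 < T := by
      rcases Nat.eq_zero_or_pos T with h | h
      · rw [h] at hTx; simp at hTx; linarith
      · exact h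
    -- bound on m
    set Q : ℝ := ∑ j, ((σ j : ℝ))^2 with hQdef
    have hQ0 : 0 ≤ Q := Finset.sum_nonneg fun j _ => by positivity
    clear_value Q
    have hQn0 : 0 ≤ (n:ℝ) * Q := by positivity
    have hmlb : (Ω:ℝ)/2 * Real.sqrt ((n:ℝ) * Q) + 1 ≤ (m:ℝ) := by
      have h1 := Nat.le_ceil ((Ω:ℝ)/2 * Real.sqrt ((n:ℝ) * Q))
      have h2 : ((⌈(Ω:ℝ)/2 * Real.sqrt ((n:ℝ) * Q)⌉₊ + 1 : ℕ) : ℝ) ≤ (m:ℝ) := by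
        exact_mod_cast hm
      push_cast at h2
      linarith
    have hmQ : (Ω:ℝ)^2 * ((n:ℝ) * Q) < 4 * (m:ℝ)^2 := by
      have hs := Real.sq_sqrt hQn0
      have h0 : 0 ≤ Real.sqrt ((n:ℝ) * Q) := Real.sqrt_nonneg _
      have hΩ0 : (0:ℝ) ≤ (Ω:ℝ) := Nat.cast_nonneg Ω
      have h2m : (Ω:ℝ) * Real.sqrt ((n:ℝ) * Q) + 2 ≤ 2 * m := by linarith
      have hp : ((Ω:ℝ) * Real.sqrt ((n:ℝ) * Q) + 2)^2 ≤ (2 * (m:ℝ))^2 := by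
        apply pow_le_pow_left₀ (by positivity) h2m
      nlinarith [hp, hs, mul_nonneg hΩ0 h0]
    have hTQ : (T:ℝ) ≤ Q := by
      rw [hQdef]
      have : (T:ℝ) = ∑ j, (if x j = 1 then ((σ j:ℝ))^2 else 0) := by
        rw [hTdef]; push_cast
        refine Finset.sum_congr rfl fun j _ => ?_
        split <;> simp
      rw [this]
      refine Finset.sum_le_sum fun j _ => ?_
      split
      · exact le_rfl
      · positivity
    have hT1 : (1:ℝ) ≤ (Ω:ℝ)^2 * T := by
      have h1 : (1:ℝ) ≤ (Ω:ℝ) := by exact_mod_cast hΩ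
      have h2 : (1:ℝ) ≤ (T:ℝ) := by exact_mod_cast hTpos
      nlinarith
    have hkey2 : (n:ℝ) * ((Ω:ℝ)^2 * (T:ℝ)) < 4 * (m:ℝ)^2 := by
      have hn0 : (0:ℝ) ≤ n := by positivity
      nlinarith [hmQ, hTQ]
    have hn1 : (1:ℝ) ≤ (n:ℝ) := by exact_mod_cast hn
    have hnm : (n:ℝ) < 4 * (m:ℝ)^2 := by nlinarith
    -- construction
    set L : ℝ := Real.sqrt Sr with hLdef
    have hL : 0 < L := Real.sqrt_pos.2 hSpos
    have hL2 : L^2 = Sr := Real.sq_sqrt hS0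
    clear_value L
    set r : ℝ := Real.sqrt ((m:ℝ)^2 - (n:ℝ)/4) with hrdef
    have hr0 : 0 ≤ r := Real.sqrt_nonneg _
    have hr2 : r^2 = (m:ℝ)^2 - (n:ℝ)/4 := Real.sq_sqrt (by linarith)
    clear_value r
    have hrm : r ≤ (m:ℝ) := by nlinarith
    set t : Fin n → ℝ := fun j => r * ((σ j:ℝ) * x j) / L with htdef
    clear_value t
    have hx0 : ∀ j, 0 ≤ x j := fun j => by rcases hx j with h | h <;> simp [h]
    have ht0 : ∀ j, 0 ≤ t j := fun j => by
      have := hx0 j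
      simp only [htdef]
      positivity
    have hσx : ∀ j, (σ j:ℝ) * x j ≤ L := by
      intro j
      have hsq : ((σ j:ℝ) * x j)^2 ≤ Sr := by
        rw [hSr]
        have h1 : ((σ j:ℝ))^2 * x j^2 ≤ ∑ j, ((σ j:ℝ))^2 * x j^2 :=
          Finset.single_le_sum (f := fun j => ((σ j:ℝ))^2 * x j^2)
            (fun j _ => by positivity) (Finset.mem_univ j)
        calc ((σ j:ℝ) * x j)^2 = ((σ j:ℝ))^2 * x j^2 := by ring
          _ ≤ _ := h1
      nlinarith [mul_nonneg (Nat.cast_nonneg (σ j) : (0:ℝ) ≤ σ j) (hx0 j), hsq, hL2, hL]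
    have htm : ∀ j, t j ≤ (m:ℝ) := by
      intro j
      simp only [htdef]
      rw [div_le_iff₀ hL]
      nlinarith [hσx j, mul_nonneg (Nat.cast_nonneg (σ j) : (0:ℝ) ≤ σ j) (hx0 j)]
    set z : Fin n → Fin m → ℝ := fun j k => max 0 (min 1 (t j - ((k:ℕ):ℝ))) with hzdef
    clear_value z
    have hzsum : ∀ j, ∑ k : Fin m, z j k = t j := by
      intro j
      simp only [hzdef]
      rw [Fin.sum_univ_eq_sum_range (fun k => max 0 (min 1 (t j - (k:ℝ)))) m]
      exact clamp_sum m (t j) (ht0 j) (htm j)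
    have hts : ∑ j, (t j)^2 = r^2 := by
      have h1 : ∀ j, (t j)^2 = r^2/L^2 * (((σ j:ℝ))^2 * x j^2) := by
        intro j
        simp only [htdef]
        field_simp
      rw [Finset.sum_congr rfl fun j _ => h1 j, ← Finset.mul_sum, ← hSr, ← hL2]
      field_simp
    have hcon : ∑ j, ∑ k : Fin m, (2 * ((k:ℕ):ℝ) + 1) * z j k ≤ (m:ℝ)^2 := by
      have h1 : ∀ j, ∑ k : Fin m, (2 * ((k:ℕ):ℝ) + 1) * z j k ≤ (t j)^2 + 1/4 := by
        intro j
        simp only [hzdef]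
        rw [Fin.sum_univ_eq_sum_range
          (fun k => (2*(k:ℝ)+1) * max 0 (min 1 (t j - (k:ℝ)))) m]
        exact clamp_cost m (t j) (ht0 j) (htm j)
      calc ∑ j, ∑ k : Fin m, (2 * ((k:ℕ):ℝ) + 1) * z j k
          ≤ ∑ j, ((t j)^2 + 1/4) := Finset.sum_le_sum fun j _ => h1 j
        _ = (∑ j, (t j)^2) + (n:ℝ) * (1/4) := by
            rw [Finset.sum_add_distrib, Finset.sum_const, Finset.card_univ]
            simp [nsmul_eq_mul]
        _ = r^2 + (n:ℝ)/4 := by rw [hts]; ring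
        _ = (m:ℝ)^2 := by rw [hr2]; ring
    have hval : (Ω:ℝ) * r * L / m
        = ∑ j, ∑ k : Fin m, (Ω:ℝ) * (σ j:ℝ) / m * x j * z j k := by
      have h2 : ∀ j, ∑ k : Fin m, (Ω:ℝ) * (σ j:ℝ) / m * x j * z j k
          = (Ω:ℝ) * (σ j:ℝ) / m * x j * t j := by
        intro j
        rw [← Finset.mul_sum, hzsum j]
      rw [Finset.sum_congr rfl fun j _ => h2 j]
      have h3 : ∀ j, (Ω:ℝ) * (σ j:ℝ) / m * x j * t j
          = (Ω:ℝ) * r / (m * L) * (((σ j:ℝ))^2 * x j^2) := by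
        intro j
        simp only [htdef]
        field_simp
      rw [Finset.sum_congr rfl fun j _ => h3 j, ← Finset.mul_sum, ← hSr, ← hL2]
      field_simp
    have hzb' : ∀ j k, 0 ≤ z j k ∧ z j k ≤ 1 := by
      intro j k
      simp only [hzdef]
      exact ⟨le_max_left _ _, max_le zero_le_one (min_le_left _ _)⟩
    have hβge : (Ω:ℝ) * r * L / m ≤ β x :=
      (hβ x).2 ⟨z, hzb', hcon, hval⟩
    -- conclude
    have hgoal : (Ω:ℝ) * Real.sqrt Sr ≤ (N:ℝ) := by
      by_contra hcon2
      push_neg at hcon2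
      have hNsq : ((N:ℝ))^2 < (Ω:ℝ)^2 * (T:ℝ) := by
        have := pow_lt_pow_left₀ hcon2 (Nat.cast_nonneg N : (0:ℝ) ≤ N) (two_ne_zero)
        rw [mul_pow, Real.sq_sqrt hS0] at this
        rw [← hTx]
        exact this
      have hNsqN : N^2 < Ω^2 * T := by exact_mod_cast hNsq
      have hNT1 : ((N:ℝ))^2 + 1 ≤ (Ω:ℝ)^2 * (T:ℝ) := by exact_mod_cast hNsqN
      have hsq2 : ((N:ℝ) * m)^2 < ((Ω:ℝ) * r * L)^2 := by
        have he : ((Ω:ℝ) * r * L)^2 = ((Ω:ℝ)^2 * (T:ℝ)) * (m:ℝ)^2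
            - ((n:ℝ) * ((Ω:ℝ)^2 * (T:ℝ)))/4 := by
          have e1 : ((Ω:ℝ) * r * L)^2 = (Ω:ℝ)^2 * r^2 * L^2 := by ring
          rw [e1, hr2, hL2, hTx]
          ring
        have e2 : ((N:ℝ)^2 + 1) * (m:ℝ)^2 ≤ ((Ω:ℝ)^2 * (T:ℝ)) * (m:ℝ)^2 :=
          mul_le_mul_of_nonneg_right hNT1 (sq_nonneg _)
        rw [he]
        have e0 : ((N:ℝ) * m)^2 = (N:ℝ)^2 * (m:ℝ)^2 := by ring
        rw [e0]
        linarith [e2, hkey2]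
      have hlt : (N:ℝ) * m < (Ω:ℝ) * r * L :=
        lt_of_pow_lt_pow_left₀ 2 (by positivity) hsq2
      have : (N:ℝ) < (Ω:ℝ) * r * L / m := (lt_div_iff₀ hmR).2 hlt
      linarith [hβge, hβN]
    rw [← hLdef] at hgoal
    rw [hAx]
    linarith [hgoal, hN]
  refine ⟨key, ?_⟩
  -- part 2: β y ≤ Ω √(Σ σ² y²) for binary y
  have hble : ∀ y : Fin n → ℝ, (∀ j, y j = 0 ∨ y j = 1) →
      β y ≤ (Ω:ℝ) * Real.sqrt (∑ j, ((σ j:ℝ))^2 * y j^2) := by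
    intro y hy
    obtain ⟨z, hzb, hzc, hzv⟩ := (hβ y).1
    set Sr := ∑ j, ((σ j:ℝ))^2 * y j^2 with hSr
    have hS0 : 0 ≤ Sr := Finset.sum_nonneg fun j _ => by positivity
    clear_value Sr
    have hy0 : ∀ j, 0 ≤ y j := fun j => by rcases hy j with h | h <;> simp [h]
    set t : Fin n → ℝ := fun j => ∑ k : Fin m, z j k with htdef
    clear_value t
    have ht0 : ∀ j, 0 ≤ t j := fun j => by
      simp only [htdef]
      exact Finset.sum_nonneg fun k _ => (hzb j k).1
    have hqb : ∀ j, (t j)^2 ≤ ∑ k : Fin m, (2 * ((k:ℕ):ℝ) + 1) * z j k := by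
      intro j
      set zz : ℕ → ℝ := fun k => if h : k < m then z j ⟨k, h⟩ else 0 with hzzdef
      clear_value zz
      have hzz : ∀ k, 0 ≤ zz k ∧ zz k ≤ 1 := by
        intro k
        simp only [hzzdef]
        by_cases h : k < m
        · simp only [dif_pos h]; exact hzb j ⟨k, h⟩
        · simp only [dif_neg h]; exact ⟨le_rfl, zero_le_one⟩
      have e1 : ∑ k : Fin m, z j k = ∑ k ∈ Finset.range m, zz k := by
        rw [← Fin.sum_univ_eq_sum_range zz m]
        refine Finset.sum_congr rfl fun k _ => ?_
        simp only [hzzdef]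
        simp [k.isLt]
      have e2 : ∑ k : Fin m, (2 * ((k:ℕ):ℝ) + 1) * z j k
          = ∑ k ∈ Finset.range m, (2*(k:ℝ)+1) * zz k := by
        rw [← Fin.sum_univ_eq_sum_range (fun k => (2*(k:ℝ)+1) * zz k) m]
        refine Finset.sum_congr rfl fun k _ => ?_
        simp only [hzzdef]
        simp [k.isLt]
      simp only [htdef]
      rw [e1, e2]
      exact quad_bound m zz hzz
    have hts : ∑ j, (t j)^2 ≤ (m:ℝ)^2 :=
      le_trans (Finset.sum_le_sum fun j _ => hqb j) hzc
    have hcs : (∑ j, ((σ j:ℝ) * y j) * t j)^2 ≤ Sr * (m:ℝ)^2 := by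
      have h1 := Finset.sum_mul_sq_le_sq_mul_sq Finset.univ
        (fun j => (σ j:ℝ) * y j) t
      have h2 : ∑ j, ((σ j:ℝ) * y j)^2 = Sr := by
        rw [hSr]
        refine Finset.sum_congr rfl fun j _ => by ring
      rw [h2] at h1
      calc (∑ j, ((σ j:ℝ) * y j) * t j)^2 ≤ Sr * ∑ j, (t j)^2 := h1
        _ ≤ Sr * (m:ℝ)^2 := by
            exact mul_le_mul_of_nonneg_left hts hS0
    have hsum0 : 0 ≤ ∑ j, ((σ j:ℝ) * y j) * t j :=
      Finset.sum_nonneg fun j _ =>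
        mul_nonneg (mul_nonneg (Nat.cast_nonneg _) (hy0 j)) (ht0 j)
    have hcs' : ∑ j, ((σ j:ℝ) * y j) * t j ≤ Real.sqrt Sr * m := by
      have h1 : ∑ j, ((σ j:ℝ) * y j) * t j
          = Real.sqrt ((∑ j, ((σ j:ℝ) * y j) * t j)^2) :=
        (Real.sqrt_sq hsum0).symm
      rw [h1]
      calc Real.sqrt ((∑ j, ((σ j:ℝ) * y j) * t j)^2)
          ≤ Real.sqrt (Sr * (m:ℝ)^2) := Real.sqrt_le_sqrt hcs
        _ = Real.sqrt Sr * m := by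
            rw [Real.sqrt_mul hS0, Real.sqrt_sq (le_of_lt hmR)]
    have hβval : β y = (Ω:ℝ) / m * ∑ j, ((σ j:ℝ) * y j) * t j := by
      rw [hzv, Finset.mul_sum]
      refine Finset.sum_congr rfl fun j _ => ?_
      simp only [htdef]
      rw [Finset.mul_sum, Finset.mul_sum]
      refine Finset.sum_congr rfl fun k _ => ?_
      ring
    rw [hβval]
    have hΩ0 : (0:ℝ) ≤ (Ω:ℝ) / m := by positivity
    calc (Ω:ℝ) / m * ∑ j, ((σ j:ℝ) * y j) * t j
        ≤ (Ω:ℝ) / m * (Real.sqrt Sr * m) := mul_le_mul_of_nonneg_left hcs' hΩ0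
      _ = (Ω:ℝ) * Real.sqrt Sr := by field_simp
  intro p xs hxs hfeas hopt
  refine ⟨key xs hxs hfeas, ?_⟩
  intro y hy hyfeas
  refine hopt y hy ?_
  linarith [hble y hy, hyfeas]
end
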